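/- arXiv:1507.08418 — 9 statements merged into one kernel-verified Lean document; each statement's English description precedes it below -/
import Mathlib

section
/- Let H and K be real or complex Hilbert spaces and let A, B be densely defined linear operators from H to K. Then the following are equivalent: (i) dom(A+B) = dom A ∩ dom B is dense in H and (A+B)* = A* + B*; (ii) the orthogonal complement of the graph G(A+B) in H × K is contained in the range of the block operator M_{A+B, A*+B*}. -/
/-!
If `T` is a formal adjoint of `S`, a vector `M_{S,T}(x, y)` paired with `(x, S x) ∈ G(S)` gives
`‖x‖² + ‖S x‖²`, because the cross terms `⟪y, S x⟫ - ⟪T y, x⟫` cancel. Hence every vector of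
`G(S)ᗮ ∩ ran M_{S,T}` is of the form `(-T y, y)`. For dense `S`, on the other hand,
`G(S)ᗮ = {(-S* v, v)}`. Together these give: `G(S)ᗮ ⊆ ran M_{S,T}` forces `dom S` to be dense
(test with `(u, 0)`, `u ⊥ dom S`) and `S* ≤ T`, while `T ≤ S*` holds for any formal adjoint.
For `S = A + B` the operator `A* + B*` is a formal adjoint of `S`.
-/

open LinearPMap

/-- The range of the block operator `M_{S,T}(x,y) = (x - T y, S x + y)` acting on
`H × K` with domain `dom S × dom T`. -/
def blockRange {𝕜 H K : Type*} [RCLike 𝕜] [NormedAddCommGroup H] [InnerProductSpace 𝕜 H]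
    [NormedAddCommGroup K] [InnerProductSpace 𝕜 K]
    (S : H →ₗ.[𝕜] K) (T : K →ₗ.[𝕜] H) : Set (H × K) :=
  {p : H × K | ∃ (x : S.domain) (y : T.domain), p = ((x : H) - T y, S x + (y : K))}

/-- The orthogonal complement of a set of vectors in `H × K`, where `H × K`
carries the inner product `⟪(p₁,p₂),(q₁,q₂)⟫ = ⟪p₁,q₁⟫ + ⟪p₂,q₂⟫`. -/
def prodOrth {𝕜 H K : Type*} [RCLike 𝕜] [NormedAddCommGroup H] [InnerProductSpace 𝕜 H]
    [NormedAddCommGroup K] [InnerProductSpace 𝕜 K] (s : Set (H × K)) : Set (H × K) :=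
  {p : H × K | ∀ q ∈ s, inner (𝕜 := 𝕜) p.1 q.1 + inner (𝕜 := 𝕜) p.2 q.2 = 0}

namespace LinearPMap

variable {𝕜 H K : Type*} [RCLike 𝕜]
  [NormedAddCommGroup H] [InnerProductSpace 𝕜 H] [NormedAddCommGroup K] [InnerProductSpace 𝕜 K]

theorem IsFormalAdjoint.add {A B : H →ₗ.[𝕜] K} {A' B' : K →ₗ.[𝕜] H}
    (hA : A'.IsFormalAdjoint A) (hB : B'.IsFormalAdjoint B) :
    (A' + B').IsFormalAdjoint (A + B) := fun y x => by
  rw [add_apply, add_apply, inner_add_left, inner_add_right,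
    hA ⟨y, y.2.1⟩ ⟨x, x.2.1⟩, hB ⟨y, y.2.2⟩ ⟨x, x.2.2⟩]

variable {S : H →ₗ.[𝕜] K} {T : K →ₗ.[𝕜] H}

theorem mk_mem_prodOrth_graph_iff {u : H} {v : K} :
    (u, v) ∈ prodOrth (𝕜 := 𝕜) (S.graph : Set (H × K)) ↔
      ∀ x : S.domain, inner 𝕜 u (x : H) + inner 𝕜 v (S x) = 0 := by
  simp only [prodOrth, Set.mem_ofPred_eq, SetLike.mem_coe, mem_graph_iff, Prod.forall]
  constructor
  · exact fun h x => h _ _ ⟨x, rfl, rfl⟩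
  · rintro h _ _ ⟨x, rfl, rfl⟩
    exact h x

theorem mk_mem_prodOrth_graph_iff_of_dense [CompleteSpace H] (hS : Dense (S.domain : Set H))
    {u : H} {v : K} :
    (u, v) ∈ prodOrth (𝕜 := 𝕜) (S.graph : Set (H × K)) ↔
      ∃ hv : v ∈ S.adjoint.domain, S.adjoint ⟨v, hv⟩ = -u := by
  rw [mk_mem_prodOrth_graph_iff]
  constructor
  · intro h
    have hu : ∀ x : S.domain, inner 𝕜 (-u) (x : H) = inner 𝕜 v (S x) := fun x => by
      rw [inner_neg_left]
      linear_combination -h x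
    have hv : v ∈ S.adjoint.domain := mem_adjoint_domain_of_exists v ⟨-u, hu⟩
    exact ⟨hv, adjoint_apply_eq hS ⟨v, hv⟩ hu⟩
  · rintro ⟨hv, hSv⟩ x
    rw [← adjoint_isFormalAdjoint hS ⟨v, hv⟩ x, hSv, inner_neg_left, add_neg_cancel]

theorem exists_eq_neg_of_mem_prodOrth_graph_of_mem_blockRange (hT : T.IsFormalAdjoint S)
    {p : H × K} (hp : p ∈ prodOrth (𝕜 := 𝕜) (S.graph : Set (H × K)))
    (hp' : p ∈ blockRange S T) : ∃ y : T.domain, p = (-T y, (y : K)) := by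
  obtain ⟨x, y, rfl⟩ := hp'
  have hx : inner 𝕜 ((x : H) - T y) (x : H) + inner 𝕜 (S x + y) (S x) = 0 :=
    mk_mem_prodOrth_graph_iff.mp hp x
  have hnorm : (‖(x : H)‖ ^ 2 + ‖S x‖ ^ 2 : 𝕜) = 0 := by
    rw [← inner_self_eq_norm_sq_to_K, ← inner_self_eq_norm_sq_to_K, ← hx, inner_sub_left,
      inner_add_left, hT y x]
    ring
  have hx0 : (x : H) = 0 := by
    norm_cast at hnorm
    exact norm_eq_zero.mp (pow_eq_zero_iff two_ne_zero |>.mp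
      (add_eq_zero_iff_of_nonneg (sq_nonneg _) (sq_nonneg _) |>.mp hnorm).1)
  obtain rfl : x = 0 := Subtype.ext hx0
  exact ⟨y, by simp⟩

section

variable [CompleteSpace H] (hT : T.IsFormalAdjoint S)
  (h : prodOrth (𝕜 := 𝕜) (S.graph : Set (H × K)) ⊆ blockRange S T)
include hT h

theorem dense_domain_of_prodOrth_graph_subset_blockRange : Dense (S.domain : Set H) := by
  rw [Submodule.dense_iff_topologicalClosure_eq_top, Submodule.topologicalClosure_eq_top_iff,
    Submodule.eq_bot_iff]
  intro u hu
  have hp : (u, (0 : K)) ∈ prodOrth (𝕜 := 𝕜) (S.graph : Set (H × K)) :=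
    mk_mem_prodOrth_graph_iff.mpr fun x => by
      rw [inner_zero_left, add_zero, Submodule.inner_left_of_mem_orthogonal x.2 hu]
  obtain ⟨y, hy⟩ := exists_eq_neg_of_mem_prodOrth_graph_of_mem_blockRange hT hp (h hp)
  obtain ⟨rfl, hy0⟩ := Prod.ext_iff.mp hy
  obtain rfl : y = 0 := Subtype.ext hy0.symm
  simp

theorem adjoint_le_of_prodOrth_graph_subset_blockRange : S.adjoint ≤ T := by
  have hS := dense_domain_of_prodOrth_graph_subset_blockRange hT h
  have hext : ∀ v : S.adjoint.domain, ∃ y : T.domain, (y : K) = v ∧ T y = S.adjoint v := by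
    intro v
    have hp : (-S.adjoint v, (v : K)) ∈ prodOrth (𝕜 := 𝕜) (S.graph : Set (H × K)) :=
      (mk_mem_prodOrth_graph_iff_of_dense hS).mpr ⟨v.2, (neg_neg _).symm⟩
    obtain ⟨y, hy⟩ := exists_eq_neg_of_mem_prodOrth_graph_of_mem_blockRange hT hp (h hp)
    obtain ⟨hTy, hyv⟩ := Prod.ext_iff.mp hy
    exact ⟨y, hyv.symm, neg_inj.mp hTy.symm⟩
  refine ⟨fun v hv => ?_, fun v y hvy => ?_⟩
  · obtain ⟨⟨y, hy⟩, hyv : y = v, -⟩ := hext ⟨v, hv⟩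
    exact hyv ▸ hy
  · obtain ⟨y', hy'v, hTy'⟩ := hext v
    rw [← hTy', show y' = y from Subtype.ext (hy'v.trans hvy)]

end

theorem dense_domain_and_adjoint_eq_iff [CompleteSpace H] (hT : T.IsFormalAdjoint S) :
    (Dense (S.domain : Set H) ∧ S.adjoint = T) ↔
      prodOrth (𝕜 := 𝕜) (S.graph : Set (H × K)) ⊆ blockRange S T := by
  constructor
  · rintro ⟨hS, rfl⟩ ⟨u, v⟩ hp
    obtain ⟨hv, hSv⟩ := (mk_mem_prodOrth_graph_iff_of_dense hS).mp hp
    exact ⟨0, ⟨v, hv⟩, by simp [hSv]⟩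
  · intro h
    have hS := dense_domain_of_prodOrth_graph_subset_blockRange hT h
    exact ⟨hS, le_antisymm (adjoint_le_of_prodOrth_graph_subset_blockRange hT h)
      (hT.symm.le_adjoint hS)⟩

end LinearPMap

theorem sum_adjoint_iff_general {𝕜 H K : Type*} [RCLike 𝕜]
    [NormedAddCommGroup H] [InnerProductSpace 𝕜 H] [CompleteSpace H]
    [NormedAddCommGroup K] [InnerProductSpace 𝕜 K]
    (A B : H →ₗ.[𝕜] K)
    (hA : Dense (A.domain : Set H)) (hB : Dense (B.domain : Set H)) :
    (Dense ((A + B).domain : Set H) ∧ (A + B).adjoint = A.adjoint + B.adjoint) ↔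
      prodOrth (𝕜 := 𝕜) ((A + B).graph : Set (H × K)) ⊆
        blockRange (A + B) (A.adjoint + B.adjoint) :=
  dense_domain_and_adjoint_eq_iff
    ((adjoint_isFormalAdjoint hA).add (adjoint_isFormalAdjoint hB))

/-- **Theorem 1 (sums).** For densely defined operators `A, B : H → K` between Hilbert
spaces, `dom (A+B)` is dense and `(A+B)* = A* + B*` if and only if
`G(A+B)ᗮ ⊆ ran M_{A+B, A*+B*}`. -/
theorem sum_adjoint_iff {𝕜 H K : Type*} [RCLike 𝕜]
    [NormedAddCommGroup H] [InnerProductSpace 𝕜 H] [CompleteSpace H]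
    [NormedAddCommGroup K] [InnerProductSpace 𝕜 K] [CompleteSpace K]
    (A B : H →ₗ.[𝕜] K)
    (hA : Dense (A.domain : Set H)) (hB : Dense (B.domain : Set H)) :
    (Dense ((A + B).domain : Set H) ∧ (A + B).adjoint = A.adjoint + B.adjoint) ↔
      prodOrth (𝕜 := 𝕜) ((A + B).graph : Set (H × K)) ⊆
        blockRange (A + B) (A.adjoint + B.adjoint) :=
  sum_adjoint_iff_general A B hA hB
end

section
/- Let H, K, L be real or complex Hilbert spaces and let A be a densely defined linear operator from K to L and B a densely defined linear operator from H to K. Then the following are equivalent: (i) dom(AB) is dense in H and (AB)* = B* A*; (ii) the orthogonal complement of the graph G(AB) in H × L is contained in the range of the block operator M_{AB, B*A*}. -/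
open LinearPMap

/-- The product (composition) `A ∘ B` of two partially defined linear operators,
with domain `{x ∈ dom B : B x ∈ dom A}`, defined via its graph. -/
noncomputable def LinearPMap.pcomp {R E F G : Type*} [Ring R] [AddCommGroup E] [Module R E]
    [AddCommGroup F] [Module R F] [AddCommGroup G] [Module R G]
    (A : F →ₗ.[R] G) (B : E →ₗ.[R] F) : E →ₗ.[R] G :=
  Submodule.toLinearPMap
    { carrier := {p : E × G | ∃ y : F, (p.1, y) ∈ B.graph ∧ (y, p.2) ∈ A.graph}
      add_mem' := fun ⟨y, hy1, hy2⟩ ⟨z, hz1, hz2⟩ =>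
        ⟨y + z, B.graph.add_mem hy1 hz1, A.graph.add_mem hy2 hz2⟩
      zero_mem' := ⟨0, B.graph.zero_mem, A.graph.zero_mem⟩
      smul_mem' := fun c _ ⟨y, hy1, hy2⟩ =>
        ⟨c • y, B.graph.smul_mem c hy1, A.graph.smul_mem c hy2⟩ }

/-!
A formal adjoint `D` of `C` always gives vectors `(-D y, y)` of `G(C)ᗮ`. If `G(C)ᗮ` lies in
`ran M_{C,D}`, write `(u, v) = (x - D y, C x + y)`; subtracting `(-D y, y)` leaves `(x, C x)`,
which lies both in `G(C)` and in `G(C)ᗮ`, hence vanishes. So `G(C)ᗮ` consists exactly of the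
vectors `(-D y, y)`, which says that `dom C` is dense and `C* = D`. Applied to `C = AB`, this
needs only that `B* A*` is a formal adjoint of `AB`.
-/

namespace LinearPMap

theorem mem_graph_pcomp {R E F G : Type*} [Ring R] [AddCommGroup E] [Module R E]
    [AddCommGroup F] [Module R F] [AddCommGroup G] [Module R G]
    (A : F →ₗ.[R] G) (B : E →ₗ.[R] F) (p : E × G) :
    p ∈ (A.pcomp B).graph ↔ ∃ y : F, (p.1, y) ∈ B.graph ∧ (y, p.2) ∈ A.graph := by
  refine Iff.of_eq (congrArg (p ∈ ·) (Submodule.toLinearPMap_graph_eq _ ?_))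
  rintro ⟨x, z⟩ ⟨y, hxy, hyz⟩ (rfl : x = 0)
  obtain rfl : y = 0 := B.graph_fst_eq_zero_snd hxy rfl
  exact A.graph_fst_eq_zero_snd hyz rfl

variable {𝕜 E F G : Type*} [RCLike 𝕜]
  [NormedAddCommGroup E] [InnerProductSpace 𝕜 E]
  [NormedAddCommGroup F] [InnerProductSpace 𝕜 F]
  [NormedAddCommGroup G] [InnerProductSpace 𝕜 G]

theorem IsFormalAdjoint.inner_eq_of_mem_graph {T : E →ₗ.[𝕜] F} {S : F →ₗ.[𝕜] E}
    (h : T.IsFormalAdjoint S) {x : E} {y : F} {v : F} {w : E}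
    (hxy : (x, y) ∈ T.graph) (hvw : (v, w) ∈ S.graph) :
    inner 𝕜 y v = inner 𝕜 x w := by
  obtain ⟨x, rfl, rfl⟩ := T.mem_graph_iff.1 hxy
  obtain ⟨v, rfl, rfl⟩ := S.mem_graph_iff.1 hvw
  exact h x v

theorem IsFormalAdjoint.pcomp {A : F →ₗ.[𝕜] G} {A' : G →ₗ.[𝕜] F}
    {B : E →ₗ.[𝕜] F} {B' : F →ₗ.[𝕜] E}
    (hA : A.IsFormalAdjoint A') (hB : B.IsFormalAdjoint B') :
    (A.pcomp B).IsFormalAdjoint (B'.pcomp A') := by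
  intro x v
  obtain ⟨y, hxy, hyz⟩ := (mem_graph_pcomp A B _).1 ((A.pcomp B).mem_graph x)
  obtain ⟨m, hvm, hmw⟩ := (mem_graph_pcomp B' A' _).1 ((B'.pcomp A').mem_graph v)
  exact (hA.inner_eq_of_mem_graph hyz hvm).trans (hB.inner_eq_of_mem_graph hxy hmw)

theorem IsFormalAdjoint.neg_swap_mem_prodOrth_graph {T : E →ₗ.[𝕜] F} {S : F →ₗ.[𝕜] E}
    (h : T.IsFormalAdjoint S) {v : F} {w : E} (hvw : (v, w) ∈ S.graph) :
    (-w, v) ∈ prodOrth (𝕜 := 𝕜) (T.graph : Set (E × F)) := by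
  rintro ⟨x, y⟩ hxy
  rw [inner_neg_left, ← inner_conj_symm, ← inner_conj_symm v,
    h.inner_eq_of_mem_graph hxy hvw, neg_add_cancel]

end LinearPMap

section

variable {𝕜 H K : Type*} [RCLike 𝕜]
  [NormedAddCommGroup H] [InnerProductSpace 𝕜 H]
  [NormedAddCommGroup K] [InnerProductSpace 𝕜 K]
  {C : H →ₗ.[𝕜] K} {D : K →ₗ.[𝕜] H}

theorem sub_mem_prodOrth {s : Set (H × K)} {p q : H × K}
    (hp : p ∈ prodOrth (𝕜 := 𝕜) s) (hq : q ∈ prodOrth (𝕜 := 𝕜) s) :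
    p - q ∈ prodOrth (𝕜 := 𝕜) s := fun r hr => by
  simp only [Prod.fst_sub, Prod.snd_sub, inner_sub_left]
  linear_combination hp r hr - hq r hr

theorem eq_zero_of_mem_of_mem_prodOrth {s : Set (H × K)} {p : H × K}
    (hs : p ∈ s) (hp : p ∈ prodOrth (𝕜 := 𝕜) s) : p = 0 := by
  have hnorm : ‖p.1‖ ^ 2 + ‖p.2‖ ^ 2 = 0 := by
    have := hp p hs
    simp only [inner_self_eq_norm_sq_to_K] at this
    exact_mod_cast this
  obtain ⟨h₁, h₂⟩ := (add_eq_zero_iff_of_nonneg (by positivity) (by positivity)).1 hnorm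
  exact Prod.ext (by simpa using h₁) (by simpa using h₂)

theorem mem_prodOrth_graph_iff [CompleteSpace H]
    (hC : Dense (C.domain : Set H)) {u : H} {v : K} :
    (u, v) ∈ prodOrth (𝕜 := 𝕜) (C.graph : Set (H × K)) ↔ (v, -u) ∈ C.adjoint.graph := by
  rw [LinearPMap.adjoint_graph_eq_graph_adjoint hC, Submodule.mem_adjoint_iff]
  simp only [prodOrth, Set.mem_ofPred_eq, SetLike.mem_coe, Prod.forall]
  refine forall₂_congr fun x y => imp_congr_right fun _ => ?_
  rw [inner_neg_right, sub_neg_eq_add, ← inner_conj_symm y, ← inner_conj_symm x, add_comm,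
    ← _root_.map_add, map_eq_zero]

theorem prodOrth_graph_subset_blockRange_iff (h : C.IsFormalAdjoint D) :
    prodOrth (𝕜 := 𝕜) (C.graph : Set (H × K)) ⊆ blockRange C D ↔
      ∀ u v, (u, v) ∈ prodOrth (𝕜 := 𝕜) (C.graph : Set (H × K)) → (v, -u) ∈ D.graph := by
  constructor
  · intro hsub u v huv
    obtain ⟨x, y, hxy⟩ := hsub huv
    have hdiff : ((x : H), C x) = (u, v) - (-D y, (y : K)) := by
      rw [hxy, Prod.mk_sub_mk, sub_neg_eq_add, sub_add_cancel, add_sub_cancel_right]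
    obtain ⟨hx0, hCx0⟩ := Prod.mk_eq_zero.1 <| eq_zero_of_mem_of_mem_prodOrth (C.mem_graph x)
      (hdiff ▸ sub_mem_prodOrth huv (h.neg_swap_mem_prodOrth_graph (D.mem_graph y)))
    rw [hx0, hCx0, zero_sub, zero_add] at hxy
    obtain ⟨rfl, rfl⟩ := Prod.mk.inj hxy
    rw [neg_neg]
    exact D.mem_graph y
  · intro hD p hp
    obtain ⟨y, hy, hDy⟩ := D.mem_graph_iff.1 (hD p.1 p.2 hp)
    exact ⟨0, y, by simp [hy, hDy]⟩

theorem dense_domain_and_adjoint_eq_iff [CompleteSpace H] (h : C.IsFormalAdjoint D) :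
    (Dense (C.domain : Set H) ∧ C.adjoint = D) ↔
      ∀ u v, (u, v) ∈ prodOrth (𝕜 := 𝕜) (C.graph : Set (H × K)) → (v, -u) ∈ D.graph := by
  constructor
  · rintro ⟨hC, rfl⟩ u v
    exact (mem_prodOrth_graph_iff hC).1
  · intro hD
    have hC : Dense (C.domain : Set H) := by
      rw [Submodule.dense_iff_topologicalClosure_eq_top, Submodule.topologicalClosure_eq_top_iff,
        Submodule.eq_bot_iff]
      intro u hu
      have hu0 : (u, (0 : K)) ∈ prodOrth (𝕜 := 𝕜) (C.graph : Set (H × K)) := by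
        rintro ⟨x, y⟩ hxy
        rw [Submodule.inner_left_of_mem_orthogonal (C.mem_domain_of_mem_graph hxy) hu,
          inner_zero_left, add_zero]
      simpa using D.graph_fst_eq_zero_snd (hD u 0 hu0) rfl
    refine ⟨hC, le_antisymm (LinearPMap.le_of_le_graph ?_) (h.le_adjoint hC)⟩
    rintro ⟨v, w⟩ hvw
    simpa using hD (-w) v ((mem_prodOrth_graph_iff hC).2 (by simpa using hvw))

end

theorem prod_adjoint_iff_general {𝕜 H K L : Type*} [RCLike 𝕜]
    [NormedAddCommGroup H] [InnerProductSpace 𝕜 H] [CompleteSpace H]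
    [NormedAddCommGroup K] [InnerProductSpace 𝕜 K] [CompleteSpace K]
    [NormedAddCommGroup L] [InnerProductSpace 𝕜 L]
    (A : K →ₗ.[𝕜] L) (B : H →ₗ.[𝕜] K)
    (hA : Dense (A.domain : Set K)) (hB : Dense (B.domain : Set H)) :
    (Dense ((A.pcomp B).domain : Set H) ∧ (A.pcomp B).adjoint = B.adjoint.pcomp A.adjoint) ↔
      prodOrth (𝕜 := 𝕜) ((A.pcomp B).graph : Set (H × L)) ⊆
        blockRange (A.pcomp B) (B.adjoint.pcomp A.adjoint) := by
  have h := (A.adjoint_isFormalAdjoint hA).symm.pcomp (B.adjoint_isFormalAdjoint hB).symm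
  rw [prodOrth_graph_subset_blockRange_iff h]
  exact dense_domain_and_adjoint_eq_iff h

/-- **Theorem 2 (products).** For densely defined operators `A : K → L` and `B : H → K`
between Hilbert spaces, `dom (AB)` is dense and `(AB)* = B* A*` if and only if
`G(AB)ᗮ ⊆ ran M_{AB, B*A*}`. -/
theorem prod_adjoint_iff {𝕜 H K L : Type*} [RCLike 𝕜]
    [NormedAddCommGroup H] [InnerProductSpace 𝕜 H] [CompleteSpace H]
    [NormedAddCommGroup K] [InnerProductSpace 𝕜 K] [CompleteSpace K]
    [NormedAddCommGroup L] [InnerProductSpace 𝕜 L] [CompleteSpace L]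
    (A : K →ₗ.[𝕜] L) (B : H →ₗ.[𝕜] K)
    (hA : Dense (A.domain : Set K)) (hB : Dense (B.domain : Set H)) :
    (Dense ((A.pcomp B).domain : Set H) ∧ (A.pcomp B).adjoint = B.adjoint.pcomp A.adjoint) ↔
      prodOrth (𝕜 := 𝕜) ((A.pcomp B).graph : Set (H × L)) ⊆
        blockRange (A.pcomp B) (B.adjoint.pcomp A.adjoint) :=
  prod_adjoint_iff_general A B hA hB
end

section
/- Let A be a densely defined linear operator between real or complex Hilbert spaces H and K. The following are equivalent: (i) A is closed (its graph is closed in H × K); (ii) the range of the block operator M_{A,A*} equals H × K; (iii) the orthogonal complement of the set {(−A* z, z) : z ∈ dom A*} in H × K is contained in the range of M_{A,A*}. -/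
open LinearPMap

/-!
The graph `G` of `A`, viewed in the Hilbert space `WithLp 2 (H × K)`, has as orthogonal
complement the rotated adjoint graph `{(-A* z, z)}`. Hence `ran M_{A,A*} = G ⊔ Gᗮ` and
`{(-A* z, z)}ᗮ = Gᗮᗮ`, and the theorem reduces to a fact about a subspace `U` of a Hilbert space:
`U` is closed iff `U ⊔ Uᗮ = ⊤` iff `Uᗮᗮ ≤ U ⊔ Uᗮ`. For the last implication, `U ≤ Uᗮᗮ` and the
modular law give `Uᗮᗮ = (U ⊔ Uᗮ) ⊓ Uᗮᗮ = U ⊔ (Uᗮ ⊓ Uᗮᗮ) = U`, and `Uᗮᗮ` is closed.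
-/

open scoped InnerProductSpace

theorem Submodule.tfae_isClosed_sup_orthogonal {𝕜 E : Type*} [RCLike 𝕜] [NormedAddCommGroup E]
    [InnerProductSpace 𝕜 E] [CompleteSpace E] (U : Submodule 𝕜 E) :
    List.TFAE [IsClosed (U : Set E), U ⊔ Uᗮ = ⊤, Uᗮᗮ ≤ U ⊔ Uᗮ] := by
  tfae_have 1 → 2
  | hU => by
    have : CompleteSpace U := hU.completeSpace_coe
    exact sup_orthogonal_of_hasOrthogonalProjection
  tfae_have 2 → 3
  | hU => hU ▸ le_top
  tfae_have 3 → 1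
  | hU => by
    have hU' : Uᗮᗮ = U := calc
      Uᗮᗮ = (U ⊔ Uᗮ) ⊓ Uᗮᗮ := (inf_eq_right.mpr hU).symm
      _ = U ⊔ Uᗮ ⊓ Uᗮᗮ := sup_inf_assoc_of_le _ U.le_orthogonal_orthogonal
      _ = U := by rw [Uᗮ.inf_orthogonal_eq_bot, sup_bot_eq]
    exact hU' ▸ Uᗮ.isClosed_orthogonal
  tfae_finish

section WithLp

variable {R V : Type*} [Semiring R] [AddCommGroup V] [Module R V] (p : ENNReal)

variable (R) in
noncomputable def Submodule.toWithLp : Submodule R V ≃o Submodule R (WithLp p V) :=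
  Submodule.orderIsoMapComap (WithLp.linearEquiv p R V).symm

variable {p}

@[simp]
theorem Submodule.mem_toWithLp {W : Submodule R V} {u : WithLp p V} :
    u ∈ toWithLp R p W ↔ u.ofLp ∈ W :=
  mem_map_equiv W

@[simp]
theorem Submodule.mem_toWithLp_symm {U : Submodule R (WithLp p V)} {v : V} :
    v ∈ (toWithLp R p).symm U ↔ WithLp.toLp p v ∈ U :=
  Iff.rfl

theorem Submodule.isClosed_toWithLp_iff {H K : Type*} [TopologicalSpace H] [AddCommGroup H]
    [Module R H] [TopologicalSpace K] [AddCommGroup K] [Module R K] {W : Submodule R (H × K)} :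
    IsClosed (toWithLp R p W : Set (WithLp p (H × K))) ↔ IsClosed (W : Set (H × K)) := by
  have : (toWithLp R p W : Set (WithLp p (H × K))) = WithLp.ofLp ⁻¹' W := by ext; simp
  rw [this]
  exact (WithLp.prodContinuousLinearEquiv p R H K).toHomeomorph.isClosed_preimage

end WithLp

section BlockOperator

variable {𝕜 H K : Type*} [RCLike 𝕜] [NormedAddCommGroup H] [InnerProductSpace 𝕜 H]
  [NormedAddCommGroup K] [InnerProductSpace 𝕜 K]

theorem prodOrth_coe_eq_orthogonal (W : Submodule 𝕜 (H × K)) :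
    prodOrth (𝕜 := 𝕜) (W : Set (H × K)) =
      (Submodule.toWithLp 𝕜 2).symm (Submodule.toWithLp 𝕜 2 W)ᗮ := by
  ext p
  simp only [prodOrth, SetLike.mem_coe, Set.mem_ofPred_eq, Submodule.mem_toWithLp_symm,
    Submodule.mem_orthogonal', Submodule.mem_toWithLp, WithLp.prod_inner_apply]
  exact ⟨fun h u hu ↦ h _ hu, fun h q hq ↦ h (WithLp.toLp 2 q) hq⟩

noncomputable def LinearPMap.skewGraph (T : K →ₗ.[𝕜] H) : Submodule 𝕜 (H × K) :=
  T.graph.map (LinearEquiv.skewSwap 𝕜 K H).toLinearMap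

theorem LinearPMap.mem_skewGraph {T : K →ₗ.[𝕜] H} {p : H × K} :
    p ∈ T.skewGraph ↔ ∃ z : T.domain, p = (-(T z), (z : K)) := by
  constructor
  · rintro ⟨q, hq, rfl⟩
    obtain ⟨z, rfl⟩ := (mem_graph_iff' T).mp hq
    exact ⟨z, rfl⟩
  · rintro ⟨z, rfl⟩
    exact ⟨_, T.mem_graph z, rfl⟩

theorem LinearPMap.coe_skewGraph (T : K →ₗ.[𝕜] H) :
    (T.skewGraph : Set (H × K)) = {p | ∃ z : T.domain, p = (-(T z), (z : K))} :=
  Set.ext fun _ ↦ mem_skewGraph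

theorem blockRange_eq_graph_sup_skewGraph (S : H →ₗ.[𝕜] K) (T : K →ₗ.[𝕜] H) :
    blockRange S T = ↑(S.graph ⊔ T.skewGraph) := by
  ext p
  rw [SetLike.mem_coe, Submodule.mem_sup]
  constructor
  · rintro ⟨x, y, rfl⟩
    refine ⟨_, S.mem_graph x, _, mem_skewGraph.mpr ⟨y, rfl⟩, ?_⟩
    ext <;> simp [sub_eq_neg_add, add_comm]
  · rintro ⟨_, hg, v, hv, rfl⟩
    obtain ⟨x, rfl⟩ := (mem_graph_iff' S).mp hg
    obtain ⟨y, rfl⟩ := mem_skewGraph.mp hv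
    exact ⟨x, y, by ext <;> simp [sub_eq_neg_add, add_comm]⟩

variable [CompleteSpace H] (A : H →ₗ.[𝕜] K)

theorem prodOrth_graph (hA : Dense (A.domain : Set H)) :
    prodOrth (𝕜 := 𝕜) (A.graph : Set (H × K)) = A†.skewGraph := by
  ext ⟨u, w⟩
  simp only [prodOrth, Set.mem_ofPred_eq, SetLike.mem_coe, mem_graph_iff', forall_exists_index,
    forall_apply_eq_imp_iff, mem_skewGraph, Prod.mk.injEq]
  constructor
  · intro h
    have hadj : ∀ x : A.domain, ⟪-u, x⟫_𝕜 = ⟪w, A x⟫_𝕜 := fun x ↦ by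
      rw [inner_neg_left]
      linear_combination -h x
    refine ⟨⟨w, mem_adjoint_domain_of_exists w ⟨-u, hadj⟩⟩, ?_, rfl⟩
    rw [adjoint_apply_eq hA _ hadj, neg_neg]
  · rintro ⟨z, rfl, rfl⟩ x
    rw [inner_neg_left, adjoint_isFormalAdjoint hA z x, neg_add_cancel]

theorem orthogonal_toWithLp_graph (hA : Dense (A.domain : Set H)) :
    (Submodule.toWithLp 𝕜 2 A.graph)ᗮ = Submodule.toWithLp 𝕜 2 A†.skewGraph := by
  rw [← OrderIso.symm_apply_eq, ← SetLike.coe_set_eq, ← prodOrth_coe_eq_orthogonal, prodOrth_graph A hA]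

end BlockOperator

/-- **Theorem 3 (closedness).** For a densely defined operator `A : H → K` between
Hilbert spaces, the following are equivalent: (i) `A` is closed;
(ii) `ran M_{A,A*} = H × K`; (iii) `{(-A* z, z) : z ∈ dom A*}ᗮ ⊆ ran M_{A,A*}`. -/
theorem closed_tfae {𝕜 H K : Type*} [RCLike 𝕜]
    [NormedAddCommGroup H] [InnerProductSpace 𝕜 H] [CompleteSpace H]
    [NormedAddCommGroup K] [InnerProductSpace 𝕜 K] [CompleteSpace K]
    (A : H →ₗ.[𝕜] K) (hA : Dense (A.domain : Set H)) :
    List.TFAE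
      [A.IsClosed,
       blockRange A A.adjoint = Set.univ,
       prodOrth (𝕜 := 𝕜) {p : H × K | ∃ z : A.adjoint.domain, p = (-(A.adjoint z), (z : K))} ⊆
         blockRange A A.adjoint] := by
  set U := Submodule.toWithLp 𝕜 2 A.graph
  have hU : Uᗮ = Submodule.toWithLp 𝕜 2 A†.skewGraph := orthogonal_toWithLp_graph A hA
  have closed_iff : A.IsClosed ↔ IsClosed (U : Set (WithLp 2 (H × K))) :=
    Submodule.isClosed_toWithLp_iff.symm
  have range_iff : blockRange A A† = Set.univ ↔ U ⊔ Uᗮ = ⊤ := by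
    rw [blockRange_eq_graph_sup_skewGraph, Submodule.coe_eq_univ, hU, ← map_sup, map_eq_top_iff]
  have orth_iff : prodOrth (𝕜 := 𝕜) {p : H × K | ∃ z : A†.domain, p = (-(A† z), (z : K))}
      ⊆ blockRange A A† ↔ Uᗮᗮ ≤ U ⊔ Uᗮ := by
    rw [← coe_skewGraph, prodOrth_coe_eq_orthogonal, blockRange_eq_graph_sup_skewGraph, SetLike.coe_subset_coe,
      OrderIso.symm_apply_le, map_sup, ← hU]
  rw [closed_iff, range_iff, orth_iff]
  exact U.tfae_isClosed_sup_orthogonal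
end

section
/- Let T be a densely defined linear operator between real or complex Hilbert spaces H and K. The following are equivalent: (i) T is closed; (ii) T*T and TT* are selfadjoint operators in H and K, respectively; (iii) I + T*T is surjective onto H and I + TT* is surjective onto K; (iv) the orthogonal complement of {(−T* z, z) : z ∈ dom T*} in H × K is contained in ran(I + T*T) × ran(I + TT*). -/
open LinearPMap

/-- A partially defined operator `A` in a Hilbert space is selfadjoint if it is densely
defined and `A* = A`. -/
def LinearPMap.IsSelfAdjointOp {𝕜 H : Type*} [RCLike 𝕜] [NormedAddCommGroup H]
    [InnerProductSpace 𝕜 H] [CompleteSpace H] (A : H →ₗ.[𝕜] H) : Prop :=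
  Dense (A.domain : Set H) ∧ A.adjoint = A

/-- The range `ran (I + S)` of `I + S` for a partially defined operator `S` in `H`,
i.e. the set `{x + S x : x ∈ dom S}`. -/
def ranIdAdd {𝕜 H : Type*} [RCLike 𝕜] [NormedAddCommGroup H]
    [InnerProductSpace 𝕜 H] (S : H →ₗ.[𝕜] H) : Set H :=
  {u : H | ∃ x : S.domain, u = (x : H) + S x}

/-! For a densely defined `T`, the set `V = {(-T† z, z)}` is the orthogonal complement of the graph
of `T` in `H × K`. If `T` is closed, decomposing `(h, 0)` and `(0, k)` along `graph T ⊕ V` solves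
`h = x + T†T x` and `k = y + TT† y`. Conversely, every element of
`ran (I + T†T) × ran (I + TT†)` lies in `graph T + V`, and a point of `Vᗮ ⊇ closure (graph T)` of
this form lies in `graph T`, since `V ∩ Vᗮ = 0`.

Both `T†T` and `TT†` are symmetric and nonnegative, and such an operator `S` is selfadjoint iff
`I + S` is onto: `ran (I + S)ᗮ = ker (I + S†)`, and `‖x‖, ‖S x‖ ≤ ‖x + S x‖` makes `ran (I + S)`
closed when `S` is closed. -/

open RCLike
open scoped InnerProductSpace Pointwise

theorem norm_prod_le_norm_add_of_re_inner_nonneg {𝕜 E : Type*} [RCLike 𝕜] [NormedAddCommGroup E]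
    [InnerProductSpace 𝕜 E] {a b : E} (h : 0 ≤ re ⟪a, b⟫_𝕜) : ‖(a, b)‖ ≤ ‖a + b‖ := by
  have hsq := norm_add_sq (𝕜 := 𝕜) a b
  refine norm_prod_le_iff.mpr ⟨?_, ?_⟩ <;>
  · refine (pow_le_pow_iff_left₀ (norm_nonneg _) (norm_nonneg _) two_ne_zero).mp ?_
    nlinarith [sq_nonneg ‖a‖, sq_nonneg ‖b‖]

theorem isClosed_prodOrth {𝕜 H K : Type*} [RCLike 𝕜] [NormedAddCommGroup H]
    [InnerProductSpace 𝕜 H] [NormedAddCommGroup K] [InnerProductSpace 𝕜 K] (s : Set (H × K)) :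
    IsClosed (prodOrth (𝕜 := 𝕜) s) := by
  simp only [prodOrth, Set.ofPred_forall]
  exact isClosed_biInter fun q _ => isClosed_eq (by fun_prop) continuous_const

namespace LinearPMap

section pcomp

variable {R E F G : Type*} [Ring R] [AddCommGroup E] [Module R E]
  [AddCommGroup F] [Module R F] [AddCommGroup G] [Module R G]

theorem mem_graph_pcomp_iff (A : F →ₗ.[R] G) (B : E →ₗ.[R] F) {x : E} {w : G} :
    (x, w) ∈ (A.pcomp B).graph ↔ ∃ y : F, (x, y) ∈ B.graph ∧ (y, w) ∈ A.graph := by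
  unfold LinearPMap.pcomp
  rw [Submodule.toLinearPMap_graph_eq]
  · rfl
  rintro ⟨x, w⟩ ⟨y, hxy, hyw⟩ (rfl : x = 0)
  obtain rfl : y = 0 := B.graph_fst_eq_zero_snd hxy rfl
  exact A.graph_fst_eq_zero_snd hyw rfl

theorem pcomp_domain_le (A : F →ₗ.[R] G) (B : E →ₗ.[R] F) : (A.pcomp B).domain ≤ B.domain :=
  fun x hx => by
    obtain ⟨y, hxy, -⟩ := (mem_graph_pcomp_iff A B).mp ((A.pcomp B).mem_graph ⟨x, hx⟩)
    exact mem_domain_of_mem_graph hxy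

end pcomp

variable {𝕜 E F : Type*} [RCLike 𝕜]
  [NormedAddCommGroup E] [InnerProductSpace 𝕜 E] [NormedAddCommGroup F] [InnerProductSpace 𝕜 F]

namespace IsFormalAdjoint

variable {A : F →ₗ.[𝕜] E} {B : E →ₗ.[𝕜] F}

theorem inner_pcomp_apply (hAB : A.IsFormalAdjoint B) (x x' : (A.pcomp B).domain) :
    ⟪(A.pcomp B) x, x'⟫_𝕜 = ⟪B (Submodule.inclusion (pcomp_domain_le A B) x),
      B (Submodule.inclusion (pcomp_domain_le A B) x')⟫_𝕜 := by
  obtain ⟨y, hxy, hyw⟩ := (mem_graph_pcomp_iff A B).mp ((A.pcomp B).mem_graph x)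
  obtain ⟨u, hu, rfl⟩ := B.mem_graph_iff.mp hxy
  obtain ⟨v, hv, hAv⟩ := A.mem_graph_iff.mp hyw
  obtain rfl : u = Submodule.inclusion (pcomp_domain_le A B) x := Subtype.ext hu
  dsimp only at hv hAv
  rw [← hAv, ← hv]
  exact hAB v (Submodule.inclusion (pcomp_domain_le A B) x')

theorem pcomp_self (hAB : A.IsFormalAdjoint B) : (A.pcomp B).IsFormalAdjoint (A.pcomp B) :=
  fun x x' => by
    rw [← inner_conj_symm (x : E), hAB.inner_pcomp_apply, hAB.inner_pcomp_apply, inner_conj_symm]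

theorem re_inner_pcomp_nonneg (hAB : A.IsFormalAdjoint B) (x : (A.pcomp B).domain) :
    0 ≤ re ⟪(x : E), (A.pcomp B) x⟫_𝕜 := by
  rw [inner_re_symm, hAB.inner_pcomp_apply]
  exact inner_self_nonneg

end IsFormalAdjoint

section ranIdAdd

variable {S : E →ₗ.[𝕜] E}

theorem ranIdAdd_eq_map_graph (S : E →ₗ.[𝕜] E) :
    ranIdAdd S = S.graph.map (LinearMap.fst 𝕜 E E + LinearMap.snd 𝕜 E E) := by
  ext u
  simp only [ranIdAdd, Submodule.map_coe, Set.mem_image, SetLike.mem_coe, mem_graph_iff,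
    Prod.exists, LinearMap.add_apply, LinearMap.fst_apply, LinearMap.snd_apply]
  constructor
  · rintro ⟨x, rfl⟩
    exact ⟨x, S x, ⟨x, rfl, rfl⟩, rfl⟩
  · rintro ⟨_, _, ⟨x, rfl, rfl⟩, rfl⟩
    exact ⟨x, rfl⟩

theorem add_mem_ranIdAdd_of_mem_graph {p : E × E} (hp : p ∈ S.graph) : p.1 + p.2 ∈ ranIdAdd S := by
  rw [ranIdAdd_eq_map_graph]
  exact Submodule.mem_map_of_mem hp

theorem forall_mem_ranIdAdd_iff {P : E → Prop} :
    (∀ u ∈ ranIdAdd S, P u) ↔ ∀ p ∈ S.graph, P (p.1 + p.2) := by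
  rw [ranIdAdd_eq_map_graph, Submodule.map_coe, Set.forall_mem_image]
  rfl

theorem re_inner_nonneg_of_mem_graph (hpos : ∀ x : S.domain, 0 ≤ re ⟪(x : E), S x⟫_𝕜)
    {p : E × E} (hp : p ∈ S.graph) : 0 ≤ re ⟪p.1, p.2⟫_𝕜 := by
  obtain ⟨x, h1, h2⟩ := S.mem_graph_iff.mp hp
  exact h1 ▸ h2 ▸ hpos x

variable [CompleteSpace E]

theorem mem_graph_adjoint_neg_iff (hd : Dense (S.domain : Set E)) {u : E} :
    (u, -u) ∈ S†.graph ↔ ∀ v ∈ ranIdAdd S, ⟪v, u⟫_𝕜 = 0 := by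
  simp only [adjoint_graph_eq_graph_adjoint hd, Submodule.mem_adjoint_iff, inner_neg_right,
    sub_neg_eq_add, forall_mem_ranIdAdd_iff, inner_add_left, Prod.forall, add_comm]

theorem isClosed_ranIdAdd (hS : S.IsClosed) (hpos : ∀ x : S.domain, 0 ≤ re ⟪(x : E), S x⟫_𝕜) :
    _root_.IsClosed (ranIdAdd S) := by
  have : CompleteSpace S.graph := hS.completeSpace_coe
  let f : S.graph →L[𝕜] E :=
    (ContinuousLinearMap.fst 𝕜 E E + ContinuousLinearMap.snd 𝕜 E E).comp S.graph.subtypeL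
  have hf : AntilipschitzWith 1 f := f.antilipschitz_of_bound fun p => by
    simpa [f] using norm_prod_le_norm_add_of_re_inner_nonneg (re_inner_nonneg_of_mem_graph hpos p.2)
  convert hf.isClosed_range f.uniformContinuous
  rw [ranIdAdd_eq_map_graph, Submodule.map_coe,
    ← Subtype.range_coe (s := (S.graph : Set (E × E))), ← Set.range_comp]
  rfl

theorem dense_domain_of_ranIdAdd_eq_univ (hpos : ∀ x : S.domain, 0 ≤ re ⟪(x : E), S x⟫_𝕜)
    (hran : ranIdAdd S = Set.univ) : Dense (S.domain : Set E) := by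
  rw [Submodule.dense_iff_topologicalClosure_eq_top, Submodule.topologicalClosure_eq_top_iff,
    Submodule.eq_bot_iff]
  intro u hu
  obtain ⟨x, rfl⟩ : u ∈ ranIdAdd S := hran ▸ Set.mem_univ u
  have hx : re ⟪(x : E), x + S x⟫_𝕜 = 0 := by
    rw [Submodule.inner_right_of_mem_orthogonal x.2 hu, _root_.map_zero]
  rw [inner_add_right, _root_.map_add, inner_self_eq_norm_sq] at hx
  obtain rfl : x = 0 := by
    have := hpos x
    exact Subtype.ext (norm_eq_zero.mp (by nlinarith [norm_nonneg (x : E)]))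
  simp

theorem adjoint_le_of_ranIdAdd_eq_univ (hd : Dense (S.domain : Set E))
    (hsym : S.IsFormalAdjoint S) (hran : ranIdAdd S = Set.univ) : S† ≤ S := by
  refine le_of_le_graph fun p hp => ?_
  obtain ⟨x, hx⟩ : p.1 + p.2 ∈ ranIdAdd S := hran ▸ Set.mem_univ _
  have hdiff : (p.1 - x, -(p.1 - x)) ∈ S†.graph := by
    convert S†.graph.sub_mem hp (le_graph_of_le (hsym.le_adjoint hd) (S.mem_graph x)) using 2
    · rfl
    · rw [Prod.snd_sub, eq_sub_of_add_eq' hx]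
      abel
  have h1 : p.1 = x := by
    rw [← sub_eq_zero, ← inner_self_eq_zero (𝕜 := 𝕜)]
    exact (mem_graph_adjoint_neg_iff hd).mp hdiff _ (hran ▸ Set.mem_univ _)
  have h2 : p.2 = S x := by rw [eq_sub_of_add_eq' hx, h1, add_sub_cancel_left]
  exact (Prod.ext h1 h2 : p = ((x : E), S x)) ▸ S.mem_graph x

theorem isSelfAdjointOp_of_ranIdAdd_eq_univ (hsym : S.IsFormalAdjoint S)
    (hpos : ∀ x : S.domain, 0 ≤ re ⟪(x : E), S x⟫_𝕜) (hran : ranIdAdd S = Set.univ) :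
    S.IsSelfAdjointOp :=
  have hd := dense_domain_of_ranIdAdd_eq_univ hpos hran
  ⟨hd, le_antisymm (adjoint_le_of_ranIdAdd_eq_univ hd hsym hran) (hsym.le_adjoint hd)⟩

theorem ranIdAdd_eq_univ_of_isSelfAdjointOp (hpos : ∀ x : S.domain, 0 ≤ re ⟪(x : E), S x⟫_𝕜)
    (hS : S.IsSelfAdjointOp) : ranIdAdd S = Set.univ := by
  obtain ⟨hd, hadj⟩ := hS
  set R := S.graph.map (LinearMap.fst 𝕜 E E + LinearMap.snd 𝕜 E E)
  have hR : ranIdAdd S = R := ranIdAdd_eq_map_graph S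
  have : CompleteSpace R :=
    (hR ▸ isClosed_ranIdAdd (hadj ▸ adjoint_isClosed hd) hpos).completeSpace_coe
  suffices Rᗮ = ⊥ by rw [hR, Submodule.orthogonal_eq_bot_iff.mp this, Submodule.top_coe]
  refine (Submodule.eq_bot_iff _).mpr fun u hu => ?_
  have hgraph : (u, -u) ∈ S.graph := hadj ▸ (mem_graph_adjoint_neg_iff hd).mpr
    fun v hv => Submodule.inner_right_of_mem_orthogonal (show v ∈ (R : Set E) from hR ▸ hv) hu
  have := re_inner_nonneg_of_mem_graph hpos hgraph
  rw [inner_neg_right, _root_.map_neg, inner_self_eq_norm_sq, neg_nonneg] at this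
  exact norm_eq_zero.mp (by nlinarith [norm_nonneg u])

end ranIdAdd

section skewAdjointGraph

variable {H K : Type*} [NormedAddCommGroup H] [InnerProductSpace 𝕜 H] [CompleteSpace H]
  [NormedAddCommGroup K] [InnerProductSpace 𝕜 K] {T : H →ₗ.[𝕜] K}

def skewAdjointGraph (T : H →ₗ.[𝕜] K) : Set (H × K) :=
  {p | ∃ z : T†.domain, p = (-(T† z), (z : K))}

theorem neg_mem_skewAdjointGraph {z : K} {w : H} (h : (z, w) ∈ T†.graph) :
    (-w, z) ∈ T.skewAdjointGraph := by
  obtain ⟨z, rfl, rfl⟩ := T†.mem_graph_iff.mp h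
  exact ⟨z, rfl⟩

theorem graph_subset_prodOrth (hT : Dense (T.domain : Set H)) :
    (T.graph : Set (H × K)) ⊆ prodOrth (𝕜 := 𝕜) T.skewAdjointGraph := by
  rintro ⟨a, b⟩ hg _ ⟨z, rfl⟩
  obtain ⟨x, rfl, rfl⟩ := T.mem_graph_iff.mp hg
  rw [inner_neg_right, ← (adjoint_isFormalAdjoint hT).symm x z, neg_add_cancel]

theorem closure_graph_subset_prodOrth (hT : Dense (T.domain : Set H)) :
    _root_.closure (T.graph : Set (H × K)) ⊆ prodOrth (𝕜 := 𝕜) T.skewAdjointGraph :=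
  closure_minimal (graph_subset_prodOrth hT) (isClosed_prodOrth _)

theorem prodOrth_inter_graph_add_subset (hT : Dense (T.domain : Set H)) :
    prodOrth (𝕜 := 𝕜) T.skewAdjointGraph ∩ ((T.graph : Set (H × K)) + T.skewAdjointGraph) ⊆
      T.graph := by
  rintro _ ⟨hp, g, hg, _, ⟨z, rfl⟩, rfl⟩
  have hsum := hp _ ⟨z, rfl⟩
  rw [Prod.fst_add, Prod.snd_add, inner_add_left, inner_add_left,
    add_add_add_comm, graph_subset_prodOrth hT hg _ ⟨z, rfl⟩, zero_add] at hsum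
  have hre := congrArg re hsum
  rw [_root_.map_add, inner_self_eq_norm_sq, inner_self_eq_norm_sq, _root_.map_zero] at hre
  obtain rfl : z = 0 := Subtype.ext <| norm_eq_zero.mp <| by
    nlinarith [norm_nonneg (T† z), norm_nonneg (z : K)]
  simpa using hg

theorem ranIdAdd_prod_subset_graph_add :
    ranIdAdd (T†.pcomp T) ×ˢ ranIdAdd (T.pcomp T†) ⊆
      (T.graph : Set (H × K)) + T.skewAdjointGraph := by
  rintro ⟨a, b⟩ ⟨⟨x, rfl⟩, ⟨y, rfl⟩⟩
  obtain ⟨u, hxu, hu⟩ := (mem_graph_pcomp_iff _ _).mp ((T†.pcomp T).mem_graph x)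
  obtain ⟨t, hyt, ht⟩ := (mem_graph_pcomp_iff _ _).mp ((T.pcomp T†).mem_graph y)
  refine ⟨_, T.graph.add_mem hxu ht, _, neg_mem_skewAdjointGraph (T†.graph.sub_mem hyt hu), ?_⟩
  ext <;> dsimp only [Prod.fst_add, Prod.snd_add, Prod.fst_sub, Prod.snd_sub] <;> abel

theorem mem_ranIdAdd_adjoint_pcomp {h : H}
    (hh : (h, 0) ∈ (T.graph : Set (H × K)) + T.skewAdjointGraph) :
    h ∈ ranIdAdd (T†.pcomp T) := by
  obtain ⟨⟨x, y⟩, hg, _, ⟨z, rfl⟩, hsum⟩ := hh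
  obtain ⟨rfl, hyz⟩ := Prod.ext_iff.mp hsum
  obtain rfl : y = -z := eq_neg_of_add_eq_zero_left hyz
  have hgraph : ((x, -T† z) : H × H) ∈ (T†.pcomp T).graph :=
    (mem_graph_pcomp_iff _ _).mpr ⟨_, hg, T†.graph.neg_mem (T†.mem_graph z)⟩
  exact add_mem_ranIdAdd_of_mem_graph hgraph

theorem mem_ranIdAdd_pcomp_adjoint {k : K}
    (hk : (0, k) ∈ (T.graph : Set (H × K)) + T.skewAdjointGraph) :
    k ∈ ranIdAdd (T.pcomp T†) := by
  obtain ⟨⟨x, y⟩, hg, _, ⟨z, rfl⟩, hsum⟩ := hk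
  obtain ⟨hxz, rfl⟩ := Prod.ext_iff.mp hsum
  obtain rfl : x = T† z := eq_of_sub_eq_zero (by simpa [sub_eq_add_neg] using hxz)
  have hgraph : ((z, y) : K × K) ∈ (T.pcomp T†).graph :=
    (mem_graph_pcomp_iff _ _).mpr ⟨_, T†.mem_graph z, hg⟩
  simpa [add_comm] using add_mem_ranIdAdd_of_mem_graph hgraph

theorem graph_add_skewAdjointGraph_of_isClosed [CompleteSpace K] (hT : Dense (T.domain : Set H))
    (hc : T.IsClosed) : (T.graph : Set (H × K)) + T.skewAdjointGraph = Set.univ := by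
  let G := T.graph.comap (WithLp.linearEquiv 2 𝕜 (H × K)).toLinearMap
  have : CompleteSpace G := (hc.preimage (WithLp.prod_continuous_ofLp 2 H K)).completeSpace_coe
  refine Set.eq_univ_of_forall fun p => ?_
  obtain ⟨g, hg, w, hw, hp⟩ := G.exists_add_mem_mem_orthogonal (WithLp.toLp 2 p)
  have hadj : ((WithLp.ofLp w).2, -(WithLp.ofLp w).1) ∈ T†.graph := by
    rw [adjoint_graph_eq_graph_adjoint hT, Submodule.mem_adjoint_iff]
    intro a b hab
    have := Submodule.inner_right_of_mem_orthogonal (u := WithLp.toLp 2 (a, b)) hab hw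
    rw [WithLp.prod_inner_apply] at this
    simpa [add_comm] using this
  refine ⟨_, hg, _, neg_mem_skewAdjointGraph hadj, ?_⟩
  rw [neg_neg, Prod.mk.eta]
  exact (congrArg WithLp.ofLp hp).symm

theorem ranIdAdd_eq_univ_of_isClosed [CompleteSpace K] (hT : Dense (T.domain : Set H))
    (hc : T.IsClosed) :
    ranIdAdd (T†.pcomp T) = Set.univ ∧ ranIdAdd (T.pcomp T†) = Set.univ := by
  have h := graph_add_skewAdjointGraph_of_isClosed hT hc
  exact ⟨Set.eq_univ_of_forall fun _ => mem_ranIdAdd_adjoint_pcomp (h ▸ Set.mem_univ _),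
    Set.eq_univ_of_forall fun _ => mem_ranIdAdd_pcomp_adjoint (h ▸ Set.mem_univ _)⟩

theorem isClosed_of_prodOrth_subset (hT : Dense (T.domain : Set H))
    (h : prodOrth (𝕜 := 𝕜) T.skewAdjointGraph ⊆
      ranIdAdd (T†.pcomp T) ×ˢ ranIdAdd (T.pcomp T†)) : T.IsClosed :=
  isClosed_of_closure_subset fun _ hp =>
    have hp' := closure_graph_subset_prodOrth hT hp
    prodOrth_inter_graph_add_subset hT ⟨hp', ranIdAdd_prod_subset_graph_add (h hp')⟩

end skewAdjointGraph

end LinearPMap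

/-- **Corollary (converse of von Neumann's theorem).** -/
theorem closed_iff_vonNeumann {𝕜 H K : Type*} [RCLike 𝕜]
    [NormedAddCommGroup H] [InnerProductSpace 𝕜 H] [CompleteSpace H]
    [NormedAddCommGroup K] [InnerProductSpace 𝕜 K] [CompleteSpace K]
    (T : H →ₗ.[𝕜] K) (hT : Dense (T.domain : Set H)) :
    List.TFAE
      [T.IsClosed,
       (T.adjoint.pcomp T).IsSelfAdjointOp ∧ (T.pcomp T.adjoint).IsSelfAdjointOp,
       ranIdAdd (T.adjoint.pcomp T) = Set.univ ∧ ranIdAdd (T.pcomp T.adjoint) = Set.univ,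
       prodOrth (𝕜 := 𝕜) {p : H × K | ∃ z : T.adjoint.domain, p = (-(T.adjoint z), (z : K))} ⊆
         (ranIdAdd (T.adjoint.pcomp T)) ×ˢ (ranIdAdd (T.pcomp T.adjoint))] := by
  have hAT : T†.IsFormalAdjoint T := adjoint_isFormalAdjoint hT
  have hTA : T.IsFormalAdjoint T† := hAT.symm
  tfae_have 1 → 3 := ranIdAdd_eq_univ_of_isClosed hT
  tfae_have 3 → 2 := fun ⟨h₁, h₂⟩ =>
    ⟨isSelfAdjointOp_of_ranIdAdd_eq_univ hAT.pcomp_self hAT.re_inner_pcomp_nonneg h₁,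
      isSelfAdjointOp_of_ranIdAdd_eq_univ hTA.pcomp_self hTA.re_inner_pcomp_nonneg h₂⟩
  tfae_have 2 → 3 := fun ⟨h₁, h₂⟩ =>
    ⟨ranIdAdd_eq_univ_of_isSelfAdjointOp hAT.re_inner_pcomp_nonneg h₁,
      ranIdAdd_eq_univ_of_isSelfAdjointOp hTA.re_inner_pcomp_nonneg h₂⟩
  tfae_have 3 → 4 := fun ⟨h₁, h₂⟩ => by simp [h₁, h₂]
  tfae_have 4 → 1 := isClosed_of_prodOrth_subset hT
  tfae_finish
end

section
/- Let T be a densely defined closable linear operator between real or complex Hilbert spaces H and K. Then T is closed if and only if dom T** ⊆ ran(I + T*T) and ran T** ⊆ ran(I + TT*). -/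
open LinearPMap

/-!
If `T` is closed, `H × K` splits as the graph of `T` plus its orthogonal complement, which is the
rotated graph `{(-T* y, y)}` of the adjoint; decomposing `(u, 0)` and `(0, v)` solves
`x + T*T x = u` and `y + TT* y = v`.

Conversely, `T ≤ T**` and `T**` is closed. For `x ∈ dom T**`, write `x = u + T*T u` and
`T** x = v + TT* v`, and subtract the point `(u + T* v, T u + TT* v)` of the graph of `T`
from `(x, T** x)`: what is left is `(T* e, -e)` with `e = T u - v`, so `T** T* e = -e`.
Pairing with `e` gives `‖T* e‖² = -‖e‖²`, hence `e = 0` and `x = u + T* v ∈ dom T`.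
-/

theorem LinearPMap.mem_graph_pcomp_s4 {R E F G : Type*} [Ring R] [AddCommGroup E] [Module R E]
    [AddCommGroup F] [Module R F] [AddCommGroup G] [Module R G]
    {A : F →ₗ.[R] G} {B : E →ₗ.[R] F} {x : E} {z : G} :
    (x, z) ∈ (A.pcomp B).graph ↔ ∃ y : F, (x, y) ∈ B.graph ∧ (y, z) ∈ A.graph := by
  rw [LinearPMap.pcomp, Submodule.toLinearPMap_graph_eq]
  · exact Iff.rfl
  rintro ⟨_, z⟩ ⟨y, hy, hz⟩ (rfl : _ = 0)
  obtain rfl : y = 0 := B.graph_fst_eq_zero_snd hy rfl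
  exact A.graph_fst_eq_zero_snd hz rfl

theorem mem_ranIdAdd_iff {𝕜 H : Type*} [RCLike 𝕜] [NormedAddCommGroup H]
    [InnerProductSpace 𝕜 H] {S : H →ₗ.[𝕜] H} {u : H} :
    u ∈ ranIdAdd S ↔ ∃ x w : H, (x, w) ∈ S.graph ∧ u = x + w := by
  constructor
  · rintro ⟨x, rfl⟩
    exact ⟨x, S x, S.mem_graph x, rfl⟩
  · rintro ⟨_, _, hxw, rfl⟩
    obtain ⟨x, rfl, rfl⟩ := S.mem_graph_iff.mp hxw
    exact ⟨x, rfl⟩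

theorem mem_ranIdAdd_pcomp_iff {𝕜 H F : Type*} [RCLike 𝕜] [NormedAddCommGroup H]
    [InnerProductSpace 𝕜 H] [AddCommGroup F] [Module 𝕜 F]
    {A : F →ₗ.[𝕜] H} {B : H →ₗ.[𝕜] F} {u : H} :
    u ∈ ranIdAdd (A.pcomp B) ↔
      ∃ (x : B.domain) (y : A.domain), (y : F) = B x ∧ u = x + A y := by
  rw [mem_ranIdAdd_iff]
  constructor
  · rintro ⟨_, _, hxw, rfl⟩
    obtain ⟨_, hx, hy⟩ := mem_graph_pcomp_s4.mp hxw
    obtain ⟨x, rfl, rfl⟩ := B.mem_graph_iff.mp hx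
    obtain ⟨y, hy, rfl⟩ := A.mem_graph_iff.mp hy
    exact ⟨x, y, hy, rfl⟩
  · rintro ⟨x, y, hy, rfl⟩
    refine ⟨x, A y, mem_graph_pcomp_s4.mpr ⟨B x, B.mem_graph x, ?_⟩, rfl⟩
    exact hy ▸ A.mem_graph y

namespace LinearPMap

variable {𝕜 E F : Type*} [RCLike 𝕜]
  [NormedAddCommGroup E] [InnerProductSpace 𝕜 E]
  [NormedAddCommGroup F] [InnerProductSpace 𝕜 F]

local notation "⟪" x ", " y "⟫" => inner 𝕜 x y

/-- `E × F` carries the sup norm, so orthogonal complements of graphs are taken in the `L²`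
product instead. -/
def graphLp (T : E →ₗ.[𝕜] F) : Submodule 𝕜 (WithLp 2 (E × F)) :=
  T.graph.comap (WithLp.linearEquiv 2 𝕜 (E × F)).toLinearMap

theorem IsClosed.isClosed_graphLp {T : E →ₗ.[𝕜] F} (hT : T.IsClosed) :
    _root_.IsClosed (T.graphLp : Set (WithLp 2 (E × F))) :=
  hT.preimage (WithLp.prod_continuous_ofLp 2 E F)

theorem topologicalClosure_graphLp_le {T : E →ₗ.[𝕜] F} :
    T.graphLp.topologicalClosure ≤
      T.graph.topologicalClosure.comap (WithLp.linearEquiv 2 𝕜 (E × F)).toLinearMap :=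
  Submodule.topologicalClosure_minimal _
    (Submodule.comap_mono T.graph.le_topologicalClosure)
    (T.graph.isClosed_topologicalClosure.preimage (WithLp.prod_continuous_ofLp 2 E F))

theorem IsFormalAdjoint.eq_zero_of_apply_eq_neg {T : E →ₗ.[𝕜] F} {S : F →ₗ.[𝕜] E}
    (h : S.IsFormalAdjoint T) {x : T.domain} {y : S.domain} (hy : (y : F) = T x)
    (hxy : S y = -(x : E)) : (x : E) = 0 := by
  have key : ⟪(y : F), y⟫ = -⟪(x : E), x⟫ :=
    calc ⟪(y : F), y⟫ = ⟪(y : F), T x⟫ := by rw [← hy]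
      _ = ⟪S y, x⟫ := (h y x).symm
      _ = -⟪(x : E), x⟫ := by rw [hxy, inner_neg_left]
  rw [inner_self_eq_norm_sq_to_K, inner_self_eq_norm_sq_to_K] at key
  have hnorm : ‖(y : F)‖ ^ 2 = -‖(x : E)‖ ^ 2 := mod_cast key
  exact norm_eq_zero.mp (by nlinarith [sq_nonneg ‖(y : F)‖, norm_nonneg (x : E)])

variable [CompleteSpace E]

theorem mem_orthogonal_graphLp_iff {T : E →ₗ.[𝕜] F} (hT : Dense (T.domain : Set E))
    {q : WithLp 2 (E × F)} : q ∈ T.graphLpᗮ ↔ (q.snd, -q.fst) ∈ T†.graph := by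
  rw [adjoint_graph_eq_graph_adjoint hT, Submodule.mem_adjoint_iff, Submodule.mem_orthogonal]
  refine ⟨fun h a b hab => ?_, fun h u hu => ?_⟩
  · have := h (WithLp.toLp 2 (a, b)) hab
    rw [WithLp.prod_inner_apply] at this
    rw [inner_neg_right, sub_neg_eq_add, add_comm]
    exact this
  · have := h u.fst u.snd hu
    rw [inner_neg_right, sub_neg_eq_add, add_comm] at this
    rw [WithLp.prod_inner_apply]
    exact this

variable [CompleteSpace F]

theorem IsClosed.exists_eq_graph_sub_adjoint {T : E →ₗ.[𝕜] F} (hc : T.IsClosed)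
    (hT : Dense (T.domain : Set E)) (p : E × F) :
    ∃ (x : T.domain) (y : T†.domain), p = ((x : E) - T† y, T x + y) := by
  have : CompleteSpace T.graphLp := hc.isClosed_graphLp.completeSpace_coe
  obtain ⟨a, ha, b, hb, hab⟩ := T.graphLp.exists_add_mem_mem_orthogonal (WithLp.toLp 2 p)
  obtain ⟨x, hxa, hxb⟩ := T.mem_graph_iff.mp (show (a.fst, a.snd) ∈ T.graph from ha)
  rw [mem_orthogonal_graphLp_iff hT] at hb
  obtain ⟨y, hya, hyb⟩ := T†.mem_graph_iff.mp hb
  have hp : p = (a.fst + b.fst, a.snd + b.snd) := congrArg WithLp.ofLp hab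
  refine ⟨x, y, ?_⟩
  simp only [hp, hxa, hxb, hya, hyb, sub_neg_eq_add]

theorem dense_adjoint_domain {T : E →ₗ.[𝕜] F} (hT : Dense (T.domain : Set E))
    (hcl : T.IsClosable) : Dense (T†.domain : Set F) := by
  rw [Submodule.dense_iff_topologicalClosure_eq_top, Submodule.topologicalClosure_eq_top_iff,
    Submodule.eq_bot_iff]
  intro z hz
  have hmem : WithLp.toLp 2 (0, z) ∈ T.graphLpᗮᗮ := by
    rw [Submodule.mem_orthogonal]
    intro q hq
    rw [mem_orthogonal_graphLp_iff hT] at hq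
    rw [WithLp.prod_inner_apply]
    simp [Submodule.inner_right_of_mem_orthogonal (T†.mem_domain_of_mem_graph hq) hz]
  rw [Submodule.orthogonal_orthogonal_eq_closure] at hmem
  obtain ⟨g, hg⟩ := hcl
  have : ((0 : E), z) ∈ g.graph := hg ▸ topologicalClosure_graphLp_le hmem
  exact g.graph_fst_eq_zero_snd this rfl

theorem IsClosed.mem_ranIdAdd_adjoint_pcomp {T : E →ₗ.[𝕜] F} (hc : T.IsClosed)
    (hT : Dense (T.domain : Set E)) (u : E) : u ∈ ranIdAdd (T†.pcomp T) := by
  obtain ⟨x, y, hxy⟩ := hc.exists_eq_graph_sub_adjoint hT (u, 0)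
  rw [Prod.mk.injEq] at hxy
  refine mem_ranIdAdd_pcomp_iff.mpr ⟨x, -y, neg_eq_of_add_eq_zero_left hxy.2.symm, ?_⟩
  rw [map_neg, ← sub_eq_add_neg]
  exact hxy.1

theorem IsClosed.mem_ranIdAdd_pcomp_adjoint {T : E →ₗ.[𝕜] F} (hc : T.IsClosed)
    (hT : Dense (T.domain : Set E)) (v : F) : v ∈ ranIdAdd (T.pcomp T†) := by
  obtain ⟨x, y, hxy⟩ := hc.exists_eq_graph_sub_adjoint hT (0, v)
  rw [Prod.mk.injEq] at hxy
  refine mem_ranIdAdd_pcomp_iff.mpr ⟨y, x, sub_eq_zero.mp hxy.1.symm, ?_⟩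
  rw [add_comm]
  exact hxy.2

theorem eq_adjoint_adjoint_of_ranges {T : E →ₗ.[𝕜] F} (hT : Dense (T.domain : Set E))
    (hcl : T.IsClosable) (hdom : (T††.domain : Set E) ⊆ ranIdAdd (T†.pcomp T))
    (hran : (Set.range fun x : T††.domain => T†† x) ⊆ ranIdAdd (T.pcomp T†)) :
    T = T†† := by
  have hT' := dense_adjoint_domain hT hcl
  have hle : T ≤ T†† := (adjoint_isFormalAdjoint hT).le_adjoint hT'
  refine eq_of_le_of_domain_eq hle (le_antisymm hle.1 fun x hx => ?_)
  obtain ⟨u, a, ha, hxu⟩ := mem_ranIdAdd_pcomp_iff.mp (hdom hx)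
  obtain ⟨v, b, hb, hxv⟩ :
      ∃ (v : T†.domain) (b : T.domain), (b : E) = T† v ∧ T†† ⟨x, hx⟩ = v + T b :=
    mem_ranIdAdd_pcomp_iff.mp (hran ⟨⟨x, hx⟩, rfl⟩)
  have hgraph : ((T† (a - v) : E), -((a - v : T†.domain) : F)) ∈ T††.graph := by
    have hsub := T††.graph.sub_mem (T††.graph.sub_mem (T††.mem_graph ⟨x, hx⟩)
      (le_graph_of_le hle (T.mem_graph u))) (le_graph_of_le hle (T.mem_graph b))
    convert hsub using 1
    rw [hxv]
    simp only [map_sub, Submodule.coe_sub, ← ha, ← hb, Prod.mk_sub_mk, hxu]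
    congr 1 <;> abel
  obtain ⟨e, he, hTe⟩ := T††.mem_graph_iff.mp hgraph
  have hav : a - v = 0 :=
    Subtype.ext ((adjoint_isFormalAdjoint hT').eq_zero_of_apply_eq_neg he hTe)
  rw [sub_eq_zero] at hav
  rw [hxu, hav, ← hb]
  exact T.domain.add_mem u.2 b.2

end LinearPMap

/-- **Corollary.** A densely defined closable operator `T : H → K` is closed if and only if
`dom T** ⊆ ran (I + T*T)` and `ran T** ⊆ ran (I + TT*)`. -/
theorem closed_iff_ranges {𝕜 H K : Type*} [RCLike 𝕜]
    [NormedAddCommGroup H] [InnerProductSpace 𝕜 H] [CompleteSpace H]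
    [NormedAddCommGroup K] [InnerProductSpace 𝕜 K] [CompleteSpace K]
    (T : H →ₗ.[𝕜] K) (hT : Dense (T.domain : Set H)) (hcl : T.IsClosable) :
    T.IsClosed ↔
      (T.adjoint.adjoint.domain : Set H) ⊆ ranIdAdd (T.adjoint.pcomp T) ∧
      (Set.range fun x : T.adjoint.adjoint.domain => T.adjoint.adjoint x) ⊆
        ranIdAdd (T.pcomp T.adjoint) := by
  refine ⟨fun hc => ⟨fun x _ => hc.mem_ranIdAdd_adjoint_pcomp hT x, ?_⟩,
    fun ⟨hdom, hran⟩ => ?_⟩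
  · rintro _ ⟨x, rfl⟩
    exact hc.mem_ranIdAdd_pcomp_adjoint hT _
  · rw [eq_adjoint_adjoint_of_ranges hT hcl hdom hran]
    exact adjoint_isClosed (dense_adjoint_domain hT hcl)
end

section
/- Let A be a linear operator in a real or complex Hilbert space H (not assumed densely defined). The following are equivalent: (i) A is densely defined and selfadjoint; (ii) A is symmetric and there exists a nonzero real number c such that the range of the block operator M_{A,A}(c) equals H × H; (iii) A is symmetric and there exists a nonzero real number c such that the orthogonal complement of the graph G(c⁻¹A) in H × H is contained in the range of M_{A,A}(c). -/
open LinearPMap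

/-- A partially defined operator `A` in a Hilbert space is symmetric if
`⟪A x, y⟫ = ⟪x, A y⟫` for all `x, y` in its domain. -/
def LinearPMap.IsSymmetricOp {𝕜 H : Type*} [RCLike 𝕜] [NormedAddCommGroup H]
    [InnerProductSpace 𝕜 H] (A : H →ₗ.[𝕜] H) : Prop :=
  ∀ x y : A.domain, inner (𝕜 := 𝕜) (A x) (y : H) = inner (𝕜 := 𝕜) (x : H) (A y)

/-- The range of the block operator `M_{S,T}(c)(x,y) = (c x - T y, S x + c y)` acting on
`H × H` with domain `dom S × dom T`. -/
def blockRangeC {𝕜 H : Type*} [RCLike 𝕜] [NormedAddCommGroup H] [InnerProductSpace 𝕜 H]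
    (S T : H →ₗ.[𝕜] H) (c : ℝ) : Set (H × H) :=
  {p : H × H | ∃ (x : S.domain) (y : T.domain),
    p = ((c : 𝕜) • (x : H) - T y, S x + (c : 𝕜) • (y : H))}

/-! A selfadjoint operator has a closed graph whose orthogonal complement in `H × H` is
`{(-A y, y)}`, so the orthogonal decomposition `H × H = G(A) ⊕ G(A)ᗮ` says exactly that
`M_{A,A}(1)` is onto. Conversely, for symmetric `A`, testing `M_{A,A}(c)(x, y)` against
`(x, c⁻¹ A x) ∈ G(c⁻¹A)` gives `c²‖x‖² + ‖A x‖² = 0`; so under (iii) every element of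
`G(c⁻¹A)ᗮ` is of the form `(-A y, c y)`. Applied to `(z, 0)` with `z ⊥ dom A` this gives
density, and applied to `(-c⁻¹ A† v, v)` it gives `A† ≤ A`. -/

section ProdOrth

variable {𝕜 E F : Type*} [RCLike 𝕜] [NormedAddCommGroup E] [InnerProductSpace 𝕜 E]
  [NormedAddCommGroup F] [InnerProductSpace 𝕜 F]

local notation "⟪" x ", " y "⟫" => inner 𝕜 x y

theorem LinearPMap.mem_prodOrth_graph_iff {T : E →ₗ.[𝕜] F} {p : E × F} :
    p ∈ prodOrth (𝕜 := 𝕜) (T.graph : Set (E × F)) ↔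
      ∀ u : T.domain, ⟪p.1, (u : E)⟫ + ⟪p.2, T u⟫ = 0 := by
  refine ⟨fun h u => h _ (T.mem_graph u), fun h q hq => ?_⟩
  obtain ⟨u, rfl⟩ := T.mem_graph_iff'.1 hq
  exact h u

theorem Submodule.exists_add_mem_mem_prodOrth [CompleteSpace E] [CompleteSpace F]
    {s : Submodule 𝕜 (E × F)} (hs : IsClosed (s : Set (E × F))) (p : E × F) :
    ∃ g ∈ s, ∃ q ∈ prodOrth (𝕜 := 𝕜) (s : Set (E × F)), p = g + q := by
  set K := s.comap (WithLp.linearEquiv 2 𝕜 (E × F)).toLinearMap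
  have hK : IsClosed (K : Set (WithLp 2 (E × F))) :=
    hs.preimage (WithLp.prod_continuous_ofLp 2 E F)
  have : CompleteSpace K := hK.completeSpace_coe
  obtain ⟨g, hg, q, hq, hpgq⟩ := K.exists_add_mem_mem_orthogonal (WithLp.toLp 2 p)
  refine ⟨g.ofLp, hg, q.ofLp, fun r hr => ?_, congrArg WithLp.ofLp hpgq⟩
  simpa [WithLp.prod_inner_apply] using (K.mem_orthogonal' q).1 hq (WithLp.toLp 2 r) hr

theorem LinearPMap.mem_prodOrth_graph_iff_mem_graph_adjoint [CompleteSpace E]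
    {T : E →ₗ.[𝕜] F} (hT : Dense (T.domain : Set E)) {p : E × F} :
    p ∈ prodOrth (𝕜 := 𝕜) (T.graph : Set (E × F)) ↔ (p.2, -p.1) ∈ T†.graph := by
  rw [adjoint_graph_eq_graph_adjoint hT, Submodule.mem_adjoint_iff]
  simp only [prodOrth, Set.mem_ofPred_eq, SetLike.mem_coe, Prod.forall, inner_neg_right,
    sub_neg_eq_add]
  refine forall₂_congr fun a b => imp_congr_right fun _ => ?_
  rw [← inner_conj_symm p.1, ← inner_conj_symm p.2, ← _root_.map_add (starRingEnd 𝕜),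
    map_eq_zero, add_comm]

end ProdOrth

namespace LinearPMap

variable {𝕜 H : Type*} [RCLike 𝕜] [NormedAddCommGroup H] [InnerProductSpace 𝕜 H]
  [CompleteSpace H] {A : H →ₗ.[𝕜] H}

theorem _root_.IsSelfAdjoint.isSymmetricOp (hA : IsSelfAdjoint A) : A.IsSymmetricOp := by
  have h := adjoint_isFormalAdjoint hA.dense_domain
  rw [isSelfAdjoint_def.1 hA] at h
  exact h

theorem _root_.IsSelfAdjoint.blockRangeC_one_eq_univ (hA : IsSelfAdjoint A) :
    blockRangeC A A 1 = Set.univ := by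
  refine Set.eq_univ_of_forall fun p => ?_
  obtain ⟨g, hg, q, hq, rfl⟩ := A.graph.exists_add_mem_mem_prodOrth hA.isClosed p
  obtain ⟨x, rfl⟩ := A.mem_graph_iff'.1 hg
  have hq' := (mem_prodOrth_graph_iff_mem_graph_adjoint hA.dense_domain).1 hq
  rw [isSelfAdjoint_def.1 hA] at hq'
  obtain ⟨y, hy⟩ := A.mem_graph_iff'.1 hq'
  refine ⟨x, y, ?_⟩
  simp only [Prod.ext_iff] at hy ⊢
  simp [← hy.1, neg_eq_iff_eq_neg.1 hy.2.symm, sub_eq_add_neg, add_comm]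

end LinearPMap

namespace LinearPMap.IsSymmetricOp

variable {𝕜 H : Type*} [RCLike 𝕜] [NormedAddCommGroup H] [InnerProductSpace 𝕜 H]
  {A : H →ₗ.[𝕜] H} {c : ℝ}

theorem eq_zero_of_mem_prodOrth_graph (hsym : A.IsSymmetricOp) (hc : c ≠ 0) {x y : A.domain}
    (h : ((c : 𝕜) • (x : H) - A y, A x + (c : 𝕜) • (y : H)) ∈
      prodOrth (𝕜 := 𝕜) (((c : 𝕜)⁻¹ • A).graph : Set (H × H))) :
    x = 0 := by
  have hx := mem_prodOrth_graph_iff.1 h x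
  simp only [smul_apply, inner_sub_left, inner_add_left, inner_smul_left, inner_smul_right,
    RCLike.conj_ofReal, hsym y x] at hx
  have hc𝕜 : (c : 𝕜) ≠ 0 := RCLike.ofReal_ne_zero.2 hc
  have h𝕜 : ((‖A x‖ ^ 2 + c ^ 2 * ‖(x : H)‖ ^ 2 : ℝ) : 𝕜) = 0 := by
    push_cast
    rw [← inner_self_eq_norm_sq_to_K, ← inner_self_eq_norm_sq_to_K]
    field_simp at hx
    linear_combination hx
  have hcx : c ^ 2 * ‖(x : H)‖ ^ 2 = 0 :=
    le_antisymm (by linarith [RCLike.ofReal_eq_zero.1 h𝕜, sq_nonneg ‖A x‖]) (by positivity)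
  simpa [hc] using hcx

theorem exists_eq_of_mem_prodOrth_graph (hsym : A.IsSymmetricOp) (hc : c ≠ 0)
    (hsub : prodOrth (𝕜 := 𝕜) (((c : 𝕜)⁻¹ • A).graph : Set (H × H)) ⊆ blockRangeC A A c)
    {p : H × H}
    (hp : p ∈ prodOrth (𝕜 := 𝕜) (((c : 𝕜)⁻¹ • A).graph : Set (H × H))) :
    ∃ y : A.domain, p = (-A y, (c : 𝕜) • (y : H)) := by
  obtain ⟨x, y, rfl⟩ := hsub hp
  obtain rfl := hsym.eq_zero_of_mem_prodOrth_graph hc hp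
  exact ⟨y, by simp⟩

variable [CompleteSpace H]

theorem dense_domain (hsym : A.IsSymmetricOp) (hc : c ≠ 0)
    (hsub : prodOrth (𝕜 := 𝕜) (((c : 𝕜)⁻¹ • A).graph : Set (H × H)) ⊆ blockRangeC A A c) :
    Dense (A.domain : Set H) := by
  rw [Submodule.dense_iff_topologicalClosure_eq_top, Submodule.topologicalClosure_eq_top_iff,
    Submodule.eq_bot_iff]
  intro z hz
  have hz0 : (z, (0 : H)) ∈ prodOrth (𝕜 := 𝕜) (((c : 𝕜)⁻¹ • A).graph : Set (H × H)) :=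
    mem_prodOrth_graph_iff.2 fun u => by
      simpa using (Submodule.mem_orthogonal' _ _).1 hz _ u.2
  obtain ⟨y, hy⟩ := hsym.exists_eq_of_mem_prodOrth_graph hc hsub hz0
  simp only [Prod.ext_iff] at hy
  obtain rfl : y = 0 := Subtype.ext (by simpa [hc] using hy.2.symm)
  simpa using hy.1

theorem adjoint_le (hsym : A.IsSymmetricOp) (hc : c ≠ 0)
    (hsub : prodOrth (𝕜 := 𝕜) (((c : 𝕜)⁻¹ • A).graph : Set (H × H)) ⊆ blockRangeC A A c) :
    A† ≤ A := by
  refine le_of_le_graph fun p hp => ?_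
  obtain ⟨v, rfl⟩ := A†.mem_graph_iff'.1 hp
  have hv : (-((c : 𝕜)⁻¹ • A† v), (v : H)) ∈
      prodOrth (𝕜 := 𝕜) (((c : 𝕜)⁻¹ • A).graph : Set (H × H)) :=
    mem_prodOrth_graph_iff.2 fun u => by
      simp [inner_smul_left, inner_smul_right,
        adjoint_isFormalAdjoint (hsym.dense_domain hc hsub) v u]
  obtain ⟨y, hy⟩ := hsym.exists_eq_of_mem_prodOrth_graph hc hsub hv
  simp only [Prod.ext_iff] at hy
  have hw : A† v = (c : 𝕜) • A y :=
    (inv_smul_eq_iff₀ (RCLike.ofReal_ne_zero.2 hc)).1 (neg_inj.1 hy.1)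
  rw [hy.2, hw, ← A.map_smul]
  exact A.mem_graph ((c : 𝕜) • y)

end LinearPMap.IsSymmetricOp

/-- **Theorem 4 (selfadjointness).** For an operator `A` in a Hilbert space `H` the
following are equivalent: (i) `A` is densely defined and selfadjoint; (ii) `A` is symmetric
and `ran M_{A,A}(c) = H × H` for some real `c ≠ 0`; (iii) `A` is symmetric and
`G(c⁻¹A)ᗮ ⊆ ran M_{A,A}(c)` for some real `c ≠ 0`. -/
theorem selfadjoint_tfae {𝕜 H : Type*} [RCLike 𝕜]
    [NormedAddCommGroup H] [InnerProductSpace 𝕜 H] [CompleteSpace H]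
    (A : H →ₗ.[𝕜] H) :
    List.TFAE
      [Dense (A.domain : Set H) ∧ A.adjoint = A,
       A.IsSymmetricOp ∧ ∃ c : ℝ, c ≠ 0 ∧ blockRangeC A A c = Set.univ,
       A.IsSymmetricOp ∧ ∃ c : ℝ, c ≠ 0 ∧
         prodOrth (𝕜 := 𝕜) (((c : 𝕜)⁻¹ • A).graph : Set (H × H)) ⊆ blockRangeC A A c] := by
  tfae_have 1 → 2
  | ⟨_, hA⟩ =>
    ⟨(isSelfAdjoint_def.2 hA).isSymmetricOp, 1, one_ne_zero,
      (isSelfAdjoint_def.2 hA).blockRangeC_one_eq_univ⟩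
  tfae_have 2 → 3
  | ⟨hsym, c, hc, hran⟩ => ⟨hsym, c, hc, hran ▸ Set.subset_univ _⟩
  tfae_have 3 → 1
  | ⟨hsym, c, hc, hsub⟩ =>
    have hd := hsym.dense_domain hc hsub
    ⟨hd, le_antisymm (hsym.adjoint_le hc hsub) (IsFormalAdjoint.le_adjoint hd hsym)⟩
  tfae_finish
end

section
/- Let A be a closable symmetric linear operator (not necessarily densely defined) in a real or complex Hilbert space H. The following are equivalent: (i) A is essentially selfadjoint; (ii) there exists a nonzero real number c such that the range of the block operator M_{A,A}(c) is dense in H × H; (iii) there exists a nonzero real number c such that the orthogonal complement of the graph G(c⁻¹A) in H × H is contained in the closure of the range of M_{A,A}(c). -/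
open LinearPMap

/-- A closable operator `A` in a Hilbert space is essentially selfadjoint if its closure
is a densely defined selfadjoint operator. -/
def LinearPMap.IsEssSelfAdjointOp {𝕜 H : Type*} [RCLike 𝕜] [NormedAddCommGroup H]
    [InnerProductSpace 𝕜 H] [CompleteSpace H] (A : H →ₗ.[𝕜] H) : Prop :=
  A.IsClosable ∧ Dense (A.closure.domain : Set H) ∧ A.closure.adjoint = A.closure

/-!
Write `Gᵃ` for `T.graph.adjoint`, the set of `(v, w)` with `⟪v, T x⟫ = ⟪w, x⟫` on `dom T`; it is
the graph of `T†` when `dom T` is dense, `T` is symmetric iff `G ≤ Gᵃ`, and `T` is selfadjoint iff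
`Gᵃ = G`. A vector `(u, v)` is orthogonal to `ran M_{T,T}(c)` iff `(v, -c u)` and `(u, c v)` lie
in `Gᵃ`. If `Gᵃ = G`, symmetry applied to these two points of `G` gives
`c (‖u‖² + ‖v‖²) = 0`, so the range is dense. Conversely, for symmetric `T` one has
`‖c x - T y‖² + ‖T x + c y‖² = c² (‖x‖² + ‖y‖²) + ‖T x‖² + ‖T y‖²`, so the range is closed when `T`
is, and a dense range is all of `H × H`; solving `M(x, y) = (-w, c v)` for `(v, w) ∈ Gᵃ` and
testing `(x, v - y)` against the range forces `(v, w) = (y, T y) ∈ G`. Passing from `A` to its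
closure preserves symmetry and the closure of the range. Under (iii) every vector orthogonal to
the range also lies in its closure, hence vanishes.
-/

section

variable {𝕜 H K : Type*} [RCLike 𝕜] [NormedAddCommGroup H] [InnerProductSpace 𝕜 H]
  [NormedAddCommGroup K] [InnerProductSpace 𝕜 K]

local notation "⟪" x ", " y "⟫" => inner 𝕜 x y

theorem eq_zero_of_inner_self_add_inner_self_eq_zero {p : H × K}
    (h : ⟪p.1, p.1⟫ + ⟪p.2, p.2⟫ = 0) : p = 0 := by
  have hre := congrArg RCLike.re h
  rw [_root_.map_add, inner_self_eq_norm_sq, inner_self_eq_norm_sq, _root_.map_zero] at hre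
  have h1 : ‖p.1‖ = 0 := by nlinarith [norm_nonneg p.1, norm_nonneg p.2]
  have h2 : ‖p.2‖ = 0 := by nlinarith [norm_nonneg p.1, norm_nonneg p.2]
  exact Prod.ext (norm_eq_zero.mp h1) (norm_eq_zero.mp h2)

theorem eq_zero_of_mem_prodOrth_of_mem_closure {s : Set (H × K)} {p : H × K}
    (hp : p ∈ prodOrth (𝕜 := 𝕜) s) (hps : p ∈ closure s) : p = 0 := by
  have hclosed : IsClosed {q : H × K | ⟪p.1, q.1⟫ + ⟪p.2, q.2⟫ = 0} :=
    isClosed_eq (by fun_prop) continuous_const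
  exact eq_zero_of_inner_self_add_inner_self_eq_zero (closure_minimal hp hclosed hps)

theorem dense_of_prodOrth_eq_zero [CompleteSpace H] [CompleteSpace K]
    (V : Submodule 𝕜 (H × K)) (hV : ∀ p ∈ prodOrth (𝕜 := 𝕜) (V : Set (H × K)), p = 0) :
    Dense (V : Set (H × K)) := by
  let e := WithLp.prodContinuousLinearEquiv 2 𝕜 H K
  suffices Dense (e ⁻¹' V) by
    simpa [e.surjective.image_preimage] using e.surjective.denseRange.dense_image e.continuous this
  change Dense ((V.comap (e : WithLp 2 (H × K) →ₗ[𝕜] H × K) : Submodule 𝕜 _) :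
    Set (WithLp 2 (H × K)))
  rw [Submodule.dense_iff_topologicalClosure_eq_top, Submodule.topologicalClosure_eq_top_iff,
    Submodule.eq_bot_iff]
  intro z hz
  have : e z ∈ prodOrth (𝕜 := 𝕜) (V : Set (H × K)) := fun q hq =>
    (Submodule.mem_orthogonal' _ z).mp hz (e.symm q) (by simpa using hq)
  simpa using hV _ this

theorem Submodule.topologicalClosure_le_adjoint {g : Submodule 𝕜 (H × H)} (hg : g ≤ g.adjoint) :
    g.topologicalClosure ≤ g.topologicalClosure.adjoint := by
  have hclosed : IsClosed {yx : (H × H) × (H × H) | ⟪yx.1.2, yx.2.1⟫ - ⟪yx.1.1, yx.2.2⟫ = 0} :=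
    isClosed_eq (by fun_prop) continuous_const
  have hsub : (g : Set (H × H)) ×ˢ (g : Set (H × H)) ⊆
      {yx : (H × H) × (H × H) | ⟪yx.1.2, yx.2.1⟫ - ⟪yx.1.1, yx.2.2⟫ = 0} :=
    fun yx hyx => (Submodule.mem_adjoint_iff _ _).mp (hg hyx.2) _ _ hyx.1
  intro x hx
  rw [Submodule.mem_adjoint_iff]
  intro a b hab
  refine closure_minimal hsub hclosed (a := ((a, b), x)) ?_
  rw [closure_prod_eq, ← Submodule.topologicalClosure_coe]
  exact ⟨hab, hx⟩

namespace LinearPMap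

theorem mem_graph_adjoint_iff {T : H →ₗ.[𝕜] K} {z : K × H} :
    z ∈ T.graph.adjoint ↔ ∀ x : T.domain, ⟪z.1, T x⟫ = ⟪z.2, (x : H)⟫ := by
  simp only [Submodule.mem_adjoint_iff, mem_graph_iff, Subtype.exists, exists_and_left,
    exists_eq_left, forall_exists_index, forall_apply_eq_imp_iff, Subtype.forall]
  refine forall₂_congr fun x _ => ?_
  rw [sub_eq_zero, ← inner_conj_symm, ← inner_conj_symm (x : H), (starRingEnd 𝕜).injective.eq_iff]

theorem isSymmetricOp_iff_graph_le_adjoint {A : H →ₗ.[𝕜] H} :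
    A.IsSymmetricOp ↔ A.graph ≤ A.graph.adjoint := by
  refine ⟨fun h p hp => ?_, fun h x y => (mem_graph_adjoint_iff.mp (h (A.mem_graph x)) y).symm⟩
  obtain ⟨y, hy₁, hy₂⟩ := (A.mem_graph_iff).mp hp
  exact mem_graph_adjoint_iff.mpr fun x => hy₁ ▸ hy₂ ▸ (h y x).symm

theorem IsSymmetricOp.inner_snd_fst {A : H →ₗ.[𝕜] H} (h : A.IsSymmetricOp)
    {p q : H × H} (hp : p ∈ A.graph) (hq : q ∈ A.graph) : ⟪p.2, q.1⟫ = ⟪p.1, q.2⟫ := by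
  have := (Submodule.mem_adjoint_iff _ _).mp (isSymmetricOp_iff_graph_le_adjoint.mp h hq) _ _ hp
  exact sub_eq_zero.mp this

theorem IsSymmetricOp.closure {A : H →ₗ.[𝕜] H} (hcl : A.IsClosable) (h : A.IsSymmetricOp) :
    A.closure.IsSymmetricOp := by
  rw [isSymmetricOp_iff_graph_le_adjoint, ← hcl.graph_closure_eq_closure_graph] at *
  exact Submodule.topologicalClosure_le_adjoint h

theorem isSelfAdjoint_iff_graph_adjoint_eq [CompleteSpace H] {T : H →ₗ.[𝕜] H} :
    IsSelfAdjoint T ↔ T.graph.adjoint = T.graph := by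
  constructor
  · intro h
    rw [← adjoint_graph_eq_graph_adjoint h.dense_domain, isSelfAdjoint_def.mp h]
  · intro h
    have hdense : Dense (T.domain : Set H) := by
      rw [Submodule.dense_iff_topologicalClosure_eq_top, Submodule.topologicalClosure_eq_top_iff,
        Submodule.eq_bot_iff]
      intro u hu
      have hmem : ((0 : H), u) ∈ T.graph := by
        rw [← h, mem_graph_adjoint_iff]
        intro x
        rw [inner_zero_left, (Submodule.mem_orthogonal' _ u).mp hu x x.2]
      exact T.graph_fst_eq_zero_snd hmem rfl
    rw [isSelfAdjoint_def]
    exact eq_of_eq_graph (by rw [adjoint_graph_eq_graph_adjoint hdense, h])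

theorem isEssSelfAdjointOp_iff [CompleteSpace H] {A : H →ₗ.[𝕜] H}
    (hcl : A.IsClosable) : A.IsEssSelfAdjointOp ↔ IsSelfAdjoint A.closure :=
  ⟨fun h => h.2.2, fun h => ⟨hcl, h.dense_domain, h⟩⟩

end LinearPMap

-- `blockMap c ((x, S x), (y, T y)) = M_{S,T}(c) (x, y)`
def blockMap (c : ℝ) : (H × H) × (H × H) →L[𝕜] H × H :=
  ((c : 𝕜) • (ContinuousLinearMap.fst 𝕜 H H ∘L ContinuousLinearMap.fst 𝕜 (H × H) (H × H)) -
      ContinuousLinearMap.snd 𝕜 H H ∘L ContinuousLinearMap.snd 𝕜 (H × H) (H × H)).prod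
    (ContinuousLinearMap.snd 𝕜 H H ∘L ContinuousLinearMap.fst 𝕜 (H × H) (H × H) +
      (c : 𝕜) • (ContinuousLinearMap.fst 𝕜 H H ∘L ContinuousLinearMap.snd 𝕜 (H × H) (H × H)))

@[simp]
theorem blockMap_apply (c : ℝ) (p q : H × H) :
    blockMap (𝕜 := 𝕜) c (p, q) = ((c : 𝕜) • p.1 - q.2, p.2 + (c : 𝕜) • q.1) := rfl

theorem blockRangeC_eq_map (S T : H →ₗ.[𝕜] H) (c : ℝ) :
    blockRangeC S T c =
      ((S.graph.prod T.graph).map (blockMap (𝕜 := 𝕜) (H := H) c).toLinearMap : Set (H × H)) := by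
  ext w
  constructor
  · rintro ⟨x, y, rfl⟩
    exact ⟨((x, S x), (y, T y)), ⟨S.mem_graph x, T.mem_graph y⟩, rfl⟩
  · rintro ⟨⟨p, q⟩, ⟨hp, hq⟩, rfl⟩
    obtain ⟨x, hx₁, hx₂⟩ := S.mem_graph_iff.mp hp
    obtain ⟨y, hy₁, hy₂⟩ := T.mem_graph_iff.mp hq
    exact ⟨x, y, by simp [hx₁, hx₂, hy₁, hy₂]⟩

theorem dense_blockRangeC_closure_iff {A : H →ₗ.[𝕜] H} (hcl : A.IsClosable) {c : ℝ} :
    Dense (blockRangeC A.closure A.closure c) ↔ Dense (blockRangeC A A c) := by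
  rw [← dense_closure, ← dense_closure (s := blockRangeC A A c)]
  simp only [blockRangeC_eq_map, Submodule.map_coe, Submodule.prod_coe,
    ← hcl.graph_closure_eq_closure_graph, Submodule.topologicalClosure_coe, ← closure_prod_eq,
    ContinuousLinearMap.coe_coe]
  rw [closure_image_closure (blockMap c).continuous]

theorem mem_prodOrth_blockRangeC_iff {S T : H →ₗ.[𝕜] H} {c : ℝ} {p : H × H} :
    p ∈ prodOrth (𝕜 := 𝕜) (blockRangeC S T c) ↔
      (p.2, -(c : 𝕜) • p.1) ∈ S.graph.adjoint ∧ (p.1, (c : 𝕜) • p.2) ∈ T.graph.adjoint := by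
  simp only [mem_graph_adjoint_iff, neg_smul, inner_neg_left, inner_smul_left,
    RCLike.conj_ofReal]
  constructor
  · intro h
    have h' : ∀ (x : S.domain) (y : T.domain),
        ⟪p.1, (c : 𝕜) • (x : H) - T y⟫ + ⟪p.2, S x + (c : 𝕜) • (y : H)⟫ = 0 :=
      fun x y => h _ ⟨x, y, rfl⟩
    refine ⟨fun x => ?_, fun y => ?_⟩
    · have := h' x 0
      simp only [inner_sub_right, inner_add_right, inner_smul_right, LinearPMap.map_zero,
        ZeroMemClass.coe_zero, inner_zero_right] at this
      linear_combination this
    · have := h' 0 y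
      simp only [inner_sub_right, inner_add_right, inner_smul_right, LinearPMap.map_zero,
        ZeroMemClass.coe_zero, inner_zero_right] at this
      linear_combination -this
  · rintro ⟨hS, hT⟩ q ⟨x, y, rfl⟩
    simp only [inner_sub_right, inner_add_right, inner_smul_right]
    linear_combination hS x - hT y

theorem norm_blockMap_sq {p q : H × H} (h : ⟪p.2, q.1⟫ = ⟪p.1, q.2⟫) (c : ℝ) :
    ‖(c : 𝕜) • p.1 - q.2‖ ^ 2 + ‖p.2 + (c : 𝕜) • q.1‖ ^ 2
      = c ^ 2 * (‖p.1‖ ^ 2 + ‖q.1‖ ^ 2) + ‖p.2‖ ^ 2 + ‖q.2‖ ^ 2 := by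
  rw [norm_sub_sq (𝕜 := 𝕜), norm_add_sq (𝕜 := 𝕜), norm_smul, norm_smul, inner_smul_left,
    inner_smul_right, RCLike.conj_ofReal, RCLike.re_ofReal_mul, RCLike.re_ofReal_mul, h,
    RCLike.norm_ofReal, mul_pow, mul_pow, sq_abs]
  ring

theorem norm_le_mul_norm_blockMap {c : ℝ} (hc : c ≠ 0) {p q : H × H}
    (h : ⟪p.2, q.1⟫ = ⟪p.1, q.2⟫) :
    ‖(p, q)‖ ≤ √2 / min 1 |c| * ‖blockMap (𝕜 := 𝕜) c (p, q)‖ := by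
  set m := ‖blockMap (𝕜 := 𝕜) c (p, q)‖
  set k := min 1 |c|
  have hk : 0 < k := lt_min one_pos (abs_pos.mpr hc)
  have hk1 : k ^ 2 ≤ 1 := pow_le_one₀ hk.le (min_le_left _ _)
  have hkc : k ^ 2 ≤ c ^ 2 := by
    rw [← sq_abs c]; exact pow_le_pow_left₀ hk.le (min_le_right _ _) 2
  have h₁ : ‖(c : 𝕜) • p.1 - q.2‖ ≤ m := norm_fst_le (blockMap (𝕜 := 𝕜) c (p, q))
  have h₂ : ‖p.2 + (c : 𝕜) • q.1‖ ≤ m := norm_snd_le (blockMap (𝕜 := 𝕜) c (p, q))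
  have hsum : k ^ 2 * (‖p.1‖ ^ 2 + ‖p.2‖ ^ 2 + ‖q.1‖ ^ 2 + ‖q.2‖ ^ 2) ≤ 2 * m ^ 2 := by
    have := norm_blockMap_sq h c
    nlinarith [norm_nonneg ((c : 𝕜) • p.1 - q.2), norm_nonneg (p.2 + (c : 𝕜) • q.1),
      sq_nonneg ‖p.1‖, sq_nonneg ‖p.2‖, sq_nonneg ‖q.1‖, sq_nonneg ‖q.2‖]
  have bound : ∀ r : ℝ, 0 ≤ r → k ^ 2 * r ^ 2 ≤ 2 * m ^ 2 → r ≤ √2 / k * m := by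
    intro r hr hr2
    rw [div_mul_eq_mul_div, le_div_iff₀ hk, mul_comm r]
    refine (pow_le_pow_iff_left₀ (by positivity) (by positivity) two_ne_zero).mp ?_
    rwa [mul_pow, mul_pow, Real.sq_sqrt zero_le_two]
  refine norm_prod_le_iff.mpr ⟨norm_prod_le_iff.mpr ⟨?_, ?_⟩, norm_prod_le_iff.mpr ⟨?_, ?_⟩⟩ <;>
    refine bound _ (norm_nonneg _) ?_ <;>
    nlinarith [sq_nonneg ‖p.1‖, sq_nonneg ‖p.2‖, sq_nonneg ‖q.1‖, sq_nonneg ‖q.2‖]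

theorem LinearPMap.IsSymmetricOp.isClosed_blockRangeC [CompleteSpace H] {T : H →ₗ.[𝕜] H}
    (hs : T.IsSymmetricOp) (hT : T.IsClosed) {c : ℝ} (hc : c ≠ 0) :
    _root_.IsClosed (blockRangeC T T c) := by
  let E := T.graph.prod T.graph
  have hE : _root_.IsClosed (E : Set ((H × H) × (H × H))) := by
    rw [Submodule.prod_coe]
    exact hT.prod hT
  have : CompleteSpace E := hE.completeSpace_coe
  let f := blockMap (𝕜 := 𝕜) c ∘L E.subtypeL
  have hrange : Set.range f = blockRangeC T T c := by
    rw [blockRangeC_eq_map, Submodule.map_coe]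
    ext w
    simp [f, E]
  have hf : AntilipschitzWith ⟨√2 / min 1 |c|, by positivity⟩ f :=
    f.antilipschitz_of_bound fun ⟨(p, q), hp, hq⟩ =>
      norm_le_mul_norm_blockMap hc (hs.inner_snd_fst hp hq)
  exact hrange ▸ hf.isClosed_range f.uniformContinuous

theorem dense_blockRangeC_of_prodOrth_eq_zero [CompleteSpace H] {S T : H →ₗ.[𝕜] H} {c : ℝ}
    (h : ∀ p ∈ prodOrth (𝕜 := 𝕜) (blockRangeC S T c), p = 0) : Dense (blockRangeC S T c) := by
  rw [blockRangeC_eq_map] at h ⊢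
  exact dense_of_prodOrth_eq_zero _ h

theorem IsSelfAdjoint.dense_blockRangeC [CompleteSpace H] {T : H →ₗ.[𝕜] H}
    (hT : IsSelfAdjoint T) {c : ℝ} (hc : c ≠ 0) : Dense (blockRangeC T T c) := by
  have hG := isSelfAdjoint_iff_graph_adjoint_eq.mp hT
  have hs : T.IsSymmetricOp := isSymmetricOp_iff_graph_le_adjoint.mpr hG.ge
  refine dense_blockRangeC_of_prodOrth_eq_zero fun p hp => ?_
  rw [mem_prodOrth_blockRangeC_iff, hG] at hp
  have key := hs.inner_snd_fst hp.2 hp.1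
  simp only [inner_smul_left, inner_smul_right, inner_neg_right, neg_smul, RCLike.conj_ofReal]
    at key
  have hsum : (c : 𝕜) * (⟪p.1, p.1⟫ + ⟪p.2, p.2⟫) = 0 := by linear_combination key
  exact eq_zero_of_inner_self_add_inner_self_eq_zero
    ((mul_eq_zero.mp hsum).resolve_left (RCLike.ofReal_ne_zero.mpr hc))

theorem LinearPMap.IsSymmetricOp.graph_adjoint_le {T : H →ₗ.[𝕜] H} (hs : T.IsSymmetricOp)
    {c : ℝ} (hran : blockRangeC T T c = Set.univ) : T.graph.adjoint ≤ T.graph := by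
  have hle := isSymmetricOp_iff_graph_le_adjoint.mp hs
  intro z hz
  obtain ⟨x, y, hxy⟩ : (-z.2, (c : 𝕜) • z.1) ∈ blockRangeC T T c := hran ▸ Set.mem_univ _
  obtain ⟨hx, hy⟩ := Prod.mk.inj hxy
  have horth : ((x : H), z.1 - y) ∈ prodOrth (𝕜 := 𝕜) (blockRangeC T T c) := by
    rw [mem_prodOrth_blockRangeC_iff]
    constructor
    · convert sub_mem hz (hle (T.mem_graph y)) using 1
      ext <;> simp only [Prod.fst_sub, Prod.snd_sub, neg_smul]
      linear_combination (norm := module) hx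
    · convert hle (T.mem_graph x) using 1
      ext <;> simp only
      linear_combination (norm := module) hy
  obtain ⟨hx0, hzy⟩ := Prod.mk_eq_zero.mp
    (eq_zero_of_mem_prodOrth_of_mem_closure horth (by simp [hran]))
  rw [hx0, smul_zero, zero_sub, neg_inj] at hx
  exact T.mem_graph_iff.mpr ⟨y, (sub_eq_zero.mp hzy).symm, hx.symm⟩

theorem LinearPMap.IsSymmetricOp.isSelfAdjoint_of_dense_blockRangeC [CompleteSpace H]
    {T : H →ₗ.[𝕜] H} (hs : T.IsSymmetricOp) (hT : T.IsClosed) {c : ℝ} (hc : c ≠ 0)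
    (hd : Dense (blockRangeC T T c)) : IsSelfAdjoint T := by
  have hran : blockRangeC T T c = Set.univ := by
    rw [← (hs.isClosed_blockRangeC hT hc).closure_eq, hd.closure_eq]
  exact isSelfAdjoint_iff_graph_adjoint_eq.mpr
    (le_antisymm (hs.graph_adjoint_le hran) (isSymmetricOp_iff_graph_le_adjoint.mp hs))

theorem mem_prodOrth_graph_inv_smul {A : H →ₗ.[𝕜] H} {c : ℝ} (hc : c ≠ 0) {p : H × H}
    (hp : (p.2, -(c : 𝕜) • p.1) ∈ A.graph.adjoint) :
    p ∈ prodOrth (𝕜 := 𝕜) (((c : 𝕜)⁻¹ • A).graph : Set (H × H)) := by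
  intro q hq
  obtain ⟨x, hx₁, hx₂⟩ := mem_graph_iff _ |>.mp hq
  have hx := mem_graph_adjoint_iff.mp hp x
  rw [← hx₁, ← hx₂, LinearPMap.smul_apply, inner_smul_right, hx]
  simp only [neg_smul, inner_neg_left, inner_smul_left, RCLike.conj_ofReal]
  field_simp [RCLike.ofReal_ne_zero.mpr hc]
  ring

theorem dense_blockRangeC_of_prodOrth_graph_subset [CompleteSpace H] {A : H →ₗ.[𝕜] H} {c : ℝ}
    (hc : c ≠ 0)
    (h : prodOrth (𝕜 := 𝕜) (((c : 𝕜)⁻¹ • A).graph : Set (H × H)) ⊆ closure (blockRangeC A A c)) :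
    Dense (blockRangeC A A c) :=
  dense_blockRangeC_of_prodOrth_eq_zero fun _ hp => eq_zero_of_mem_prodOrth_of_mem_closure hp
    (h (mem_prodOrth_graph_inv_smul hc (mem_prodOrth_blockRangeC_iff.mp hp).1))

end

/-- **Theorem 5 (essential selfadjointness).** For a closable symmetric (not necessarily
densely defined) operator `A` in a Hilbert space `H` the following are equivalent:
(i) `A` is essentially selfadjoint; (ii) `ran M_{A,A}(c)` is dense in `H × H` for some
real `c ≠ 0`; (iii) `G(c⁻¹A)ᗮ ⊆ closure (ran M_{A,A}(c))` for some real `c ≠ 0`. -/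
theorem essentially_selfadjoint_tfae {𝕜 H : Type*} [RCLike 𝕜]
    [NormedAddCommGroup H] [InnerProductSpace 𝕜 H] [CompleteSpace H]
    (A : H →ₗ.[𝕜] H) (hcl : A.IsClosable) (hsymm : A.IsSymmetricOp) :
    List.TFAE
      [A.IsEssSelfAdjointOp,
       ∃ c : ℝ, c ≠ 0 ∧ Dense (blockRangeC A A c),
       ∃ c : ℝ, c ≠ 0 ∧
         prodOrth (𝕜 := 𝕜) (((c : 𝕜)⁻¹ • A).graph : Set (H × H)) ⊆
           closure (blockRangeC A A c)] := by
  rw [A.isEssSelfAdjointOp_iff hcl]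
  tfae_have 1 → 2 := fun h =>
    ⟨1, one_ne_zero, (dense_blockRangeC_closure_iff hcl).mp (h.dense_blockRangeC one_ne_zero)⟩
  tfae_have 2 → 1 := fun ⟨_, hc, hd⟩ =>
    (hsymm.closure hcl).isSelfAdjoint_of_dense_blockRangeC hcl.closure_isClosed hc
      ((dense_blockRangeC_closure_iff hcl).mpr hd)
  tfae_have 2 → 3 := fun ⟨c, hc, hd⟩ => ⟨c, hc, hd.closure_eq ▸ Set.subset_univ _⟩
  tfae_have 3 → 2 := fun ⟨c, hc, h⟩ => ⟨c, hc, dense_blockRangeC_of_prodOrth_graph_subset hc h⟩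
  tfae_finish
end

section
/- Let A and B be symmetric linear operators in a real or complex Hilbert space H with dom A ⊆ dom B. Assume that A is selfadjoint, that A is (A+B)-bounded, and that there exists b > 0 such that ‖B x‖² ≤ ‖A x‖² + ‖(A+B) x‖² + b²‖x‖² for all x ∈ dom A. Then A + B (with domain dom A) is selfadjoint. -/
open LinearPMap

/-!
Write `T = A + B`, so that `dom T = dom A`. Since `A` is `T`-bounded, `A xₙ` converges whenever
`xₙ` and `T xₙ` do; as `A` is closed and `B` is closable, `T` is closed. Splitting `H × H` into
the closed graph of `T` and its orthogonal complement shows that the closed symmetric `T` is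
selfadjoint as soon as `T* u = v`, `T* v = -u` force `u = 0`. To check that, split `(u, v)` along
the graph of the selfadjoint `εA` instead: `(u, v) = (x - εAz, z + εAx)` with `x, z ∈ dom A`.
Pairing `T* u = v` with `z` and `T* v = -u` with `x` gives
`‖x‖² + ‖z‖² = -ε Re (⟪Tx, Ax⟫ + ⟪Tz, Az⟫)`, while the hypothesis on `B` says precisely that
`-2 Re ⟪Tx, Ax⟫ ≤ b² ‖x‖²`; for `ε b² < 2` this forces `x = z = 0`.
-/

open Filter Topology

theorem cauchySeq_of_sq_norm_sub_le {E F G : Type*} [SeminormedAddCommGroup E]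
    [SeminormedAddCommGroup F] [SeminormedAddCommGroup G] {f : ℕ → E} {g : ℕ → F} {h : ℕ → G}
    {α β : ℝ} (hg : CauchySeq g) (hh : CauchySeq h)
    (hf : ∀ m n, ‖f m - f n‖ ^ 2 ≤ α * ‖g m - g n‖ ^ 2 + β * ‖h m - h n‖ ^ 2) :
    CauchySeq f := by
  rw [cauchySeq_iff_tendsto_dist_atTop_0] at hg hh ⊢
  have hlim : Tendsto (fun p : ℕ × ℕ => √(α * dist (g p.1) (g p.2) ^ 2 +
      β * dist (h p.1) (h p.2) ^ 2)) atTop (𝓝 0) := by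
    simpa using ((hg.pow 2).const_mul α |>.add ((hh.pow 2).const_mul β)).sqrt
  refine squeeze_zero (fun _ => dist_nonneg) (fun p => Real.le_sqrt_of_sq_le ?_) hlim
  simpa only [dist_eq_norm] using hf p.1 p.2

namespace LinearPMap

section Closed

variable {𝕜 E F : Type*} [NormedField 𝕜] [NormedAddCommGroup E] [NormedSpace 𝕜 E]
  [NormedAddCommGroup F] [NormedSpace 𝕜 F] [CompleteSpace F]

theorem isClosed_add_of_isClosed_of_isClosable {A B : E →ₗ.[𝕜] F} (hA : A.IsClosed)
    (hB : B.IsClosable) (hAB : A.domain ≤ B.domain) {α β : ℝ}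
    (hbdd : ∀ x : (A + B).domain,
      ‖A ⟨x, x.2.1⟩‖ ^ 2 ≤ α * ‖(A + B) x‖ ^ 2 + β * ‖(x : E)‖ ^ 2) :
    (A + B).IsClosed := by
  rw [LinearPMap.IsClosed, ← isSeqClosed_iff_isClosed]
  intro p q hp hpq
  choose x hx using fun n => (mem_graph_iff _).1 (hp n)
  have hx₁ : Tendsto (fun n => (x n : E)) atTop (𝓝 q.1) := by
    simpa only [Function.comp_def, (hx _).1] using (continuous_fst.tendsto q).comp hpq
  have hx₂ : Tendsto (fun n => (A + B) (x n)) atTop (𝓝 q.2) := by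
    simpa only [Function.comp_def, (hx _).2] using (continuous_snd.tendsto q).comp hpq
  have hcauchy : CauchySeq fun n => A ⟨x n, (x n).2.1⟩ :=
    cauchySeq_of_sq_norm_sub_le hx₂.cauchySeq hx₁.cauchySeq fun m n => by
      rw [← map_sub, ← map_sub]
      exact hbdd (x m - x n)
  obtain ⟨a, ha⟩ := cauchySeq_tendsto_of_complete hcauchy
  have hqA : (q.1, a) ∈ A.graph :=
    hA.mem_of_tendsto (hx₁.prodMk_nhds ha)
      (Eventually.of_forall fun n => A.mem_graph ⟨x n, (x n).2.1⟩)
  have hqB : (q.1, q.2 - a) ∈ B.closure.graph := by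
    refine hB.closure_isClosed.mem_of_tendsto (hx₁.prodMk_nhds (hx₂.sub ha))
      (Eventually.of_forall fun n => le_graph_of_le (le_closure B) ?_)
    simpa only [add_apply, add_sub_cancel_left] using B.mem_graph ⟨x n, (x n).2.2⟩
  have hq : q.1 ∈ A.domain := mem_domain_of_mem_graph hqA
  have hAq : A ⟨q.1, hq⟩ = a := ((image_iff hq).2 hqA).symm
  have hBq : B ⟨q.1, hAB hq⟩ = q.2 - a :=
    B.closure.mem_graph_snd_inj (le_graph_of_le (le_closure B) (B.mem_graph _)) hqB rfl
  refine (mem_graph_iff _).2 ⟨⟨q.1, hq, hAB hq⟩, rfl, ?_⟩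
  rw [add_apply]
  simp only [hAq, hBq, add_sub_cancel]

end Closed

section Hilbert

open ComplexConjugate

variable {𝕜 E F : Type*} [RCLike 𝕜] [NormedAddCommGroup E] [InnerProductSpace 𝕜 E]
  [NormedAddCommGroup F] [InnerProductSpace 𝕜 F]

local notation "⟪" x ", " y "⟫" => inner 𝕜 x y

theorem IsFormalAdjoint.add_s10 {T T' : E →ₗ.[𝕜] F} {S S' : F →ₗ.[𝕜] E} (h : T.IsFormalAdjoint S)
    (h' : T'.IsFormalAdjoint S') : (T + T').IsFormalAdjoint (S + S') := fun x y => by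
  rw [add_apply, add_apply, inner_add_left, inner_add_right, h ⟨x, x.2.1⟩ ⟨y, y.2.1⟩,
    h' ⟨x, x.2.2⟩ ⟨y, y.2.2⟩]

variable [CompleteSpace E] {T : E →ₗ.[𝕜] F}

theorem IsFormalAdjoint.isClosable {S : F →ₗ.[𝕜] E} (hT : Dense (T.domain : Set E))
    (h : T.IsFormalAdjoint S) : S.IsClosable :=
  (adjoint_isClosed hT).isClosable.leIsClosable (h.le_adjoint hT)

theorem smul_adjoint_le_adjoint_smul (hT : Dense (T.domain : Set E)) (c : 𝕜) :
    conj c • T† ≤ (c • T)† :=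
  IsFormalAdjoint.le_adjoint hT fun x y => by
    rw [smul_apply, smul_apply, inner_smul_left, inner_smul_right,
      (adjoint_isFormalAdjoint hT).symm x y]

theorem adjoint_smul (hT : Dense (T.domain : Set E)) {c : 𝕜} (hc : c ≠ 0) :
    (c • T)† = conj c • T† := by
  have hle := smul_adjoint_le_adjoint_smul hT c
  refine (eq_of_le_of_domain_eq hle (le_antisymm hle.1 ?_)).symm
  simpa only [smul_domain, smul_smul, inv_mul_cancel₀ hc, one_smul] using
    (smul_adjoint_le_adjoint_smul (T := c • T) hT c⁻¹).1

theorem _root_.IsSelfAdjoint.ofReal_smul {A : E →ₗ.[𝕜] E} (hA : IsSelfAdjoint A) {r : ℝ}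
    (hr : r ≠ 0) : IsSelfAdjoint ((r : 𝕜) • A) := by
  rw [isSelfAdjoint_def, adjoint_smul hA.dense_domain (RCLike.ofReal_ne_zero.2 hr),
    RCLike.conj_ofReal, isSelfAdjoint_def.1 hA]

theorem _root_.IsSelfAdjoint.isFormalAdjoint {A : E →ₗ.[𝕜] E} (hA : IsSelfAdjoint A) :
    A.IsFormalAdjoint A := by
  simpa only [isSelfAdjoint_def.1 hA] using adjoint_isFormalAdjoint hA.dense_domain

variable [CompleteSpace F]

theorem exists_eq_sub_adjoint_add (hT : T.IsClosed) (hd : Dense (T.domain : Set E))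
    (p : E × F) : ∃ (x : T.domain) (y : T†.domain), p = ((x : E) - T† y, T x + y) := by
  set K : Submodule 𝕜 (WithLp 2 (E × F)) :=
    T.graph.comap (WithLp.linearEquiv 2 𝕜 (E × F)).toLinearMap
  have : CompleteSpace K := (hT.preimage (WithLp.prod_continuous_ofLp 2 E F)).completeSpace_coe
  obtain ⟨q, hq, r, hr, hqr⟩ := K.exists_add_mem_mem_orthogonal (WithLp.toLp 2 p)
  obtain ⟨x, hx₁, hx₂⟩ := (mem_graph_iff T).1 hq
  have hr' : ((WithLp.ofLp r).2, -(WithLp.ofLp r).1) ∈ T†.graph := by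
    rw [adjoint_graph_eq_graph_adjoint hd, Submodule.mem_adjoint_iff]
    intro a b hab
    have horth := (Submodule.mem_orthogonal K r).1 hr (WithLp.toLp 2 (a, b)) hab
    rw [WithLp.prod_inner_apply] at horth
    rw [inner_neg_right, sub_neg_eq_add, add_comm]
    exact horth
  obtain ⟨y, hy₁, hy₂⟩ := (mem_graph_iff _).1 hr'
  refine ⟨x, y, ?_⟩
  rw [hx₁, hx₂, hy₁, hy₂, sub_neg_eq_add]
  exact congrArg WithLp.ofLp hqr

end Hilbert

section SelfAdjoint

open RCLike

variable {𝕜 E : Type*} [RCLike 𝕜] [NormedAddCommGroup E] [InnerProductSpace 𝕜 E]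
  [CompleteSpace E]

local notation "⟪" x ", " y "⟫" => inner 𝕜 x y

theorem eq_zero_of_mem_graph_adjoint_of_lt_one {A T : E →ₗ.[𝕜] E} (hA : IsSelfAdjoint A)
    (hAT : A.domain ≤ T.domain) (hT : T.IsFormalAdjoint T) {c : ℝ} (hc₁ : c < 1)
    (hc : ∀ x (hx : x ∈ A.domain), -re ⟪T ⟨x, hAT hx⟩, A ⟨x, hx⟩⟫ ≤ c * ‖x‖ ^ 2)
    {u v : E} (huv : (u, v) ∈ T†.graph) (hvu : (v, -u) ∈ T†.graph) : u = 0 := by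
  have hdecomp := exists_eq_sub_adjoint_add hA.isClosed hA.dense_domain (u, v)
  rw [isSelfAdjoint_def.1 hA] at hdecomp
  obtain ⟨x, z, hxz⟩ := hdecomp
  obtain ⟨rfl, rfl⟩ := Prod.mk.inj hxz
  rw [adjoint_graph_eq_graph_adjoint (hA.dense_domain.mono hAT), Submodule.mem_adjoint_iff]
    at huv hvu
  have h₁ := (RCLike.ext_iff.1 (sub_eq_zero.1 (huv _ _ (T.mem_graph ⟨z, hAT z.2⟩)))).1
  have h₂ := (RCLike.ext_iff.1 (sub_eq_zero.1 (hvu _ _ (T.mem_graph ⟨x, hAT x.2⟩)))).1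
  simp only [inner_sub_right, inner_add_right, inner_neg_right] at h₁ h₂
  simp only [_root_.map_sub, _root_.map_add, _root_.map_neg, inner_self_eq_norm_sq] at h₁ h₂
  have hTs : re ⟪T ⟨z, hAT z.2⟩, x⟫ = re ⟪T ⟨x, hAT x.2⟩, z⟫ := by
    rw [hT ⟨z, hAT z.2⟩ ⟨x, hAT x.2⟩, inner_re_symm]
  have hAs : re ⟪(z : E), A x⟫ = re ⟪(x : E), A z⟫ := by
    rw [← hA.isFormalAdjoint z x, inner_re_symm]
  have hx : -re ⟪T ⟨x, hAT x.2⟩, A x⟫ ≤ c * ‖(x : E)‖ ^ 2 := hc x x.2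
  have hz : -re ⟪T ⟨z, hAT z.2⟩, A z⟫ ≤ c * ‖(z : E)‖ ^ 2 := hc z z.2
  -- with `hTs` and `hAs`, `h₁ - h₂` reads `‖x‖² + ‖z‖² = -re ⟪T x, A x⟫ - re ⟪T z, A z⟫`
  have hnorm : (1 - c) * (‖(x : E)‖ ^ 2 + ‖(z : E)‖ ^ 2) ≤ 0 := by linarith
  have hx0 : ‖(x : E)‖ ^ 2 = 0 := by nlinarith [sq_nonneg ‖(x : E)‖, sq_nonneg ‖(z : E)‖]
  have hz0 : ‖(z : E)‖ ^ 2 = 0 := by nlinarith [sq_nonneg ‖(x : E)‖, sq_nonneg ‖(z : E)‖]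
  rw [sq_eq_zero_iff, norm_eq_zero, Submodule.coe_eq_zero] at hx0 hz0
  simp [hx0, hz0]

theorem eq_zero_of_mem_graph_adjoint {A T : E →ₗ.[𝕜] E} (hA : IsSelfAdjoint A)
    (hAT : A.domain ≤ T.domain) (hT : T.IsFormalAdjoint T) {c : ℝ}
    (hc : ∀ x (hx : x ∈ A.domain), -re ⟪T ⟨x, hAT hx⟩, A ⟨x, hx⟩⟫ ≤ c * ‖x‖ ^ 2)
    {u v : E} (huv : (u, v) ∈ T†.graph) (hvu : (v, -u) ∈ T†.graph) : u = 0 := by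
  set r : ℝ := (|c| + 1)⁻¹
  have hr : 0 < r := by positivity
  refine eq_zero_of_mem_graph_adjoint_of_lt_one (hA.ofReal_smul hr.ne') hAT hT (c := r * c) ?_
    (fun x hx => ?_) huv hvu
  · calc r * c ≤ r * |c| := mul_le_mul_of_nonneg_left (le_abs_self c) hr.le
      _ < r * (|c| + 1) := mul_lt_mul_of_pos_left (lt_add_one _) hr
      _ = 1 := inv_mul_cancel₀ (by positivity)
  · rw [smul_apply, inner_smul_right, re_ofReal_mul, mul_assoc]
    linarith [mul_le_mul_of_nonneg_left (hc x hx) hr.le]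

theorem isSelfAdjoint_of_isClosed {T : E →ₗ.[𝕜] E} (hT : T.IsClosed)
    (hd : Dense (T.domain : Set E)) (hsymm : T.IsFormalAdjoint T)
    (hker : ∀ u v, (u, v) ∈ T†.graph → (v, -u) ∈ T†.graph → u = 0) : IsSelfAdjoint T := by
  have hle : T ≤ T† := hsymm.le_adjoint hd
  refine isSelfAdjoint_def.2 (le_antisymm (le_of_le_graph fun p hp => ?_) hle)
  obtain ⟨x, y, rfl⟩ := exists_eq_sub_adjoint_add hT hd p
  have hTx : ((x : E), T x) ∈ T†.graph := le_graph_of_le hle (T.mem_graph x)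
  have hy : (-(T† y), (y : E)) ∈ T†.graph := by simpa using sub_mem hp hTx
  have hTy : T† y = 0 := neg_eq_zero.1 (hker _ _ hy (by simp))
  have hy0 : (y : E) = 0 := T†.graph_fst_eq_zero_snd hy (by rw [hTy, neg_zero])
  simp [hTy, hy0]

end SelfAdjoint

end LinearPMap

theorem selfadjoint_add_general {𝕜 H : Type*} [RCLike 𝕜]
    [NormedAddCommGroup H] [InnerProductSpace 𝕜 H] [CompleteSpace H]
    (A B : H →ₗ.[𝕜] H) (hBsymm : B.IsSymmetricOp)
    (hsub : A.domain ≤ B.domain)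
    (hA : A.IsSelfAdjointOp)
    (hbdd : ∃ α β : ℝ, 0 ≤ α ∧ 0 ≤ β ∧ ∀ x : (A + B).domain,
      ‖A ⟨x.1, (Submodule.mem_inf.mp x.2).1⟩‖ ^ 2 ≤
        α * ‖(A + B) x‖ ^ 2 + β * ‖(x : H)‖ ^ 2)
    (hb : ∃ b : ℝ, 0 < b ∧ ∀ x : A.domain,
      ‖B ⟨x.1, hsub x.2⟩‖ ^ 2 ≤ ‖A x‖ ^ 2 +
        ‖(A + B) ⟨x.1, Submodule.mem_inf.mpr ⟨x.2, hsub x.2⟩⟩‖ ^ 2 + b ^ 2 * ‖(x : H)‖ ^ 2) :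
    (A + B).IsSelfAdjointOp := by
  obtain ⟨α, β, -, -, hbdd⟩ := hbdd
  obtain ⟨b, -, hb⟩ := hb
  have hA' : IsSelfAdjoint A := isSelfAdjoint_def.2 hA.2
  have hAT : A.domain ≤ (A + B).domain := le_inf le_rfl hsub
  have hdense : Dense ((A + B).domain : Set H) := hA.1.mono hAT
  have hsymm : (A + B).IsFormalAdjoint (A + B) := hA'.isFormalAdjoint.add_s10 hBsymm
  have hclosed : (A + B).IsClosed := isClosed_add_of_isClosed_of_isClosable hA'.isClosed
    (IsFormalAdjoint.isClosable (hA.1.mono hsub) hBsymm) hsub hbdd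
  have hlower : ∀ x (hx : x ∈ A.domain),
      -RCLike.re (inner 𝕜 ((A + B) ⟨x, hAT hx⟩) (A ⟨x, hx⟩)) ≤ b ^ 2 / 2 * ‖x‖ ^ 2 := fun x hx => by
    have hB : B ⟨x, hsub hx⟩ = (A + B) ⟨x, hAT hx⟩ - A ⟨x, hx⟩ :=
      eq_sub_of_add_eq' (add_apply A B ⟨x, hAT hx⟩).symm
    have h := hb ⟨x, hx⟩
    rw [hB, @norm_sub_sq 𝕜] at h
    linarith
  exact ⟨hdense, isSelfAdjoint_def.1 <| isSelfAdjoint_of_isClosed hclosed hdense hsymm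
    fun _ _ => eq_zero_of_mem_graph_adjoint hA' hAT hsymm hlower⟩

/-- **Corollary (selfadjoint perturbation).** Let `A, B` be symmetric operators in a
Hilbert space `H` with `dom A ⊆ dom B`. If `A` is selfadjoint, `A` is `(A+B)`-bounded, and
`‖B x‖² ≤ ‖A x‖² + ‖(A+B) x‖² + b²‖x‖²` on `dom A` for some `b > 0`, then `A + B`
(defined on `dom A`) is selfadjoint. -/
theorem selfadjoint_add {𝕜 H : Type*} [RCLike 𝕜]
    [NormedAddCommGroup H] [InnerProductSpace 𝕜 H] [CompleteSpace H]
    (A B : H →ₗ.[𝕜] H) (hAsymm : A.IsSymmetricOp) (hBsymm : B.IsSymmetricOp)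
    (hsub : A.domain ≤ B.domain)
    (hA : A.IsSelfAdjointOp)
    (hbdd : ∃ α β : ℝ, 0 ≤ α ∧ 0 ≤ β ∧ ∀ x : (A + B).domain,
      ‖A ⟨x.1, (Submodule.mem_inf.mp x.2).1⟩‖ ^ 2 ≤
        α * ‖(A + B) x‖ ^ 2 + β * ‖(x : H)‖ ^ 2)
    (hb : ∃ b : ℝ, 0 < b ∧ ∀ x : A.domain,
      ‖B ⟨x.1, hsub x.2⟩‖ ^ 2 ≤ ‖A x‖ ^ 2 +
        ‖(A + B) ⟨x.1, Submodule.mem_inf.mpr ⟨x.2, hsub x.2⟩⟩‖ ^ 2 + b ^ 2 * ‖(x : H)‖ ^ 2) :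
    (A + B).IsSelfAdjointOp :=
  selfadjoint_add_general A B hBsymm hsub hA hbdd hb
end

section
/- Let A and B be symmetric linear operators in a real or complex Hilbert space H with common dense domain 𝒟. Assume that A is selfadjoint (so dom A = 𝒟) and that ⟨A x, B y⟩ = ⟨B x, A y⟩ for all x, y ∈ 𝒟. Then both B and A + B (each with domain 𝒟) are essentially selfadjoint. -/
/-!
Write `R f := (1 + A²)⁻¹ f`; it is obtained by projecting `(f, 0)` orthogonally onto the graph
of `A`, which is closed because `A` is selfadjoint. `R` is a selfadjoint contraction with range in
`𝒟`, it commutes with `A`, and the hypothesis `⟪A x, B y⟫ = ⟪B x, A y⟫` makes it commute with `B`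
on `𝒟` as well. Hence `B R u = R (B* u)` for every `u ∈ dom B*`. Applied to `A / (n + 1)`, this
gives contractions `R_n → 1` strongly with `(R_n u, B R_n u) → (u, B* u)`, so `B*` lies in the
closure of `B`; as `B` is symmetric, the closure of `B` is `B*` and is selfadjoint.
The operator `A + B` satisfies the same hypotheses as `B`.
-/

open LinearPMap

open Filter Topology
open scoped InnerProductSpace

namespace LinearPMap

variable {𝕜 E F : Type*} [RCLike 𝕜] [NormedAddCommGroup E] [InnerProductSpace 𝕜 E]
  [NormedAddCommGroup F] [InnerProductSpace 𝕜 F]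

theorem IsClosed.closure_eq {T : E →ₗ.[𝕜] F} (hT : T.IsClosed) : T.closure = T :=
  eq_of_eq_graph <| by
    rw [← hT.isClosable.graph_closure_eq_closure_graph, hT.submodule_topologicalClosure_eq]

theorem IsSymmetricOp.add {A B : E →ₗ.[𝕜] E} (hA : A.IsSymmetricOp) (hB : B.IsSymmetricOp) :
    (A + B).IsSymmetricOp := fun x y => by
  rw [add_apply, add_apply, inner_add_left, inner_add_right]
  exact congrArg₂ (· + ·) (hA ⟨x, x.2.1⟩ ⟨y, y.2.1⟩) (hB ⟨x, x.2.2⟩ ⟨y, y.2.2⟩)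

variable [CompleteSpace E]

theorem adjoint_le_adjoint {S T : E →ₗ.[𝕜] F} (hS : Dense (S.domain : Set E)) (h : S ≤ T) :
    T† ≤ S† := by
  refine IsFormalAdjoint.le_adjoint hS fun x y => ?_
  rw [h.2 (y := ⟨x, h.1 x.2⟩) rfl]
  exact (adjoint_isFormalAdjoint (hS.mono h.1)).symm ⟨x, h.1 x.2⟩ y

theorem adjoint_closure {T : E →ₗ.[𝕜] F} (hT : Dense (T.domain : Set E)) (hcl : T.IsClosable) :
    T.closure† = T† := by
  refine le_antisymm (adjoint_le_adjoint hT T.le_closure) (IsFormalAdjoint.le_adjoint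
    (hT.mono T.le_closure.1) fun x y => ?_)
  have hgraph : (T.graph : Set (E × F)) ⊆ {p | ⟪p.2, (y : F)⟫_𝕜 = ⟪p.1, T† y⟫_𝕜} := by
    rintro ⟨_, _⟩ hp
    obtain ⟨z, rfl, rfl⟩ := T.mem_graph_iff.mp hp
    exact (adjoint_isFormalAdjoint hT).symm z y
  have hclosed : _root_.IsClosed {p : E × F | ⟪p.2, (y : F)⟫_𝕜 = ⟪p.1, T† y⟫_𝕜} :=
    isClosed_eq (by fun_prop) (by fun_prop)
  have hx : ((x : E), T.closure x) ∈ _root_.closure (T.graph : Set (E × F)) := by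
    rw [← Submodule.topologicalClosure_coe, hcl.graph_closure_eq_closure_graph]
    exact T.closure.mem_graph x
  exact closure_minimal hgraph hclosed hx

theorem IsSelfAdjointOp.isSymmetricOp {A : E →ₗ.[𝕜] E} (hA : A.IsSelfAdjointOp) :
    A.IsSymmetricOp := by
  have h := adjoint_isFormalAdjoint hA.1 (T := A)
  rwa [hA.2] at h

theorem isEssSelfAdjointOp_of_adjoint_graph_subset {S : E →ₗ.[𝕜] E}
    (hS : Dense (S.domain : Set E)) (hsymm : S.IsSymmetricOp)
    (h : (S†.graph : Set (E × E)) ⊆ _root_.closure S.graph) : S.IsEssSelfAdjointOp := by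
  have hclosed := adjoint_isClosed hS
  have hle : S ≤ S† := IsFormalAdjoint.le_adjoint hS hsymm
  have hcl : S.IsClosable := hclosed.isClosable.leIsClosable hle
  have hclosure : S.closure = S† := by
    refine le_antisymm ?_ (le_of_le_graph ?_)
    · simpa only [hclosed.closure_eq] using hclosed.isClosable.closure_mono hle
    · rwa [← hcl.graph_closure_eq_closure_graph, ← SetLike.coe_subset_coe,
        Submodule.topologicalClosure_coe]
  exact ⟨hcl, hS.mono S.le_closure.1, by rw [adjoint_closure hS hcl, hclosure]⟩

end LinearPMap

section

variable {𝕜 H : Type*} [RCLike 𝕜] [NormedAddCommGroup H] [InnerProductSpace 𝕜 H]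

theorem eq_zero_of_inner_self_add_inner_self_eq_zero_s14 {x z : H}
    (h : ⟪x, x⟫_𝕜 + ⟪z, z⟫_𝕜 = 0) : x = 0 := by
  have hre := congrArg RCLike.re h
  rw [_root_.map_add, inner_self_eq_norm_sq, inner_self_eq_norm_sq, _root_.map_zero] at hre
  exact norm_eq_zero.mp (pow_eq_zero_iff two_ne_zero |>.mp
    (le_antisymm (by linarith [sq_nonneg ‖z‖]) (sq_nonneg _)))

/-- `a ⊆ a*` and `a* ⊆ a` for the operator `a` with domain `D`. Keeping `D` fixed, rather than
using `LinearPMap.IsSelfAdjointOp`, lets `a` be rescaled without transporting domains. -/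
structure IsSelfAdjointOperator {D : Submodule 𝕜 H} (a : D →ₗ[𝕜] H) : Prop where
  symm : ∀ x y : D, ⟪a x, (y : H)⟫_𝕜 = ⟪(x : H), a y⟫_𝕜
  adjoint_le : ∀ y w : H, (∀ x : D, ⟪w, (x : H)⟫_𝕜 = ⟪y, a x⟫_𝕜) → ∃ hy : y ∈ D, a ⟨y, hy⟩ = w

theorem LinearPMap.IsSelfAdjointOp.isSelfAdjointOperator [CompleteSpace H] {A : H →ₗ.[𝕜] H}
    (hA : A.IsSelfAdjointOp) : IsSelfAdjointOperator A.toFun where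
  symm := hA.isSymmetricOp
  adjoint_le y w h := by
    have hy : y ∈ A†.domain := mem_adjoint_domain_of_exists y ⟨w, h⟩
    rw [← hA.2]
    exact ⟨hy, adjoint_apply_eq hA.1 ⟨y, hy⟩ h⟩

namespace IsSelfAdjointOperator

variable {D : Submodule 𝕜 H} {a b : D →ₗ[𝕜] H}

theorem smul (ha : IsSelfAdjointOperator a) {r : ℝ} (hr : r ≠ 0) :
    IsSelfAdjointOperator ((r : 𝕜) • a) where
  symm x y := by
    simp only [LinearMap.smul_apply, inner_smul_left, inner_smul_right, RCLike.conj_ofReal,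
      ha.symm x y]
  adjoint_le y w h := by
    have hr' : (r : 𝕜) ≠ 0 := RCLike.ofReal_ne_zero.mpr hr
    obtain ⟨hy, hyw⟩ := ha.adjoint_le y ((r : 𝕜)⁻¹ • w) fun x => by
      rw [inner_smul_left, h x, LinearMap.smul_apply, inner_smul_right, map_inv₀,
        RCLike.conj_ofReal, inv_mul_cancel_left₀ hr']
    exact ⟨hy, by rw [LinearMap.smul_apply, hyw, smul_inv_smul₀ hr']⟩

theorem isClosed_range_toLp (ha : IsSelfAdjointOperator a) :
    IsClosed (Set.range fun x : D => WithLp.toLp 2 ((x : H), a x)) := by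
  have hrange : (Set.range fun x : D => WithLp.toLp 2 ((x : H), a x)) =
      ⋂ x : D, {p | ⟪p.snd, (x : H)⟫_𝕜 = ⟪p.fst, a x⟫_𝕜} := by
    ext p
    simp only [Set.mem_range, Set.mem_iInter, Set.mem_ofPred_eq]
    constructor
    · rintro ⟨y, rfl⟩ x
      exact ha.symm y x
    · intro h
      obtain ⟨hy, hyw⟩ := ha.adjoint_le p.fst p.snd h
      exact ⟨⟨p.fst, hy⟩, by rw [hyw]; rfl⟩
  rw [hrange]
  exact isClosed_iInter fun x => isClosed_eq (by fun_prop) (by fun_prop)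

variable [CompleteSpace H]

theorem exists_inner_add_inner_eq (ha : IsSelfAdjointOperator a) (f : H) :
    ∃ t : D, ∀ y : D, ⟪(t : H), y⟫_𝕜 + ⟪a t, a y⟫_𝕜 = ⟪f, y⟫_𝕜 := by
  let G : Submodule 𝕜 (WithLp 2 (H × H)) :=
    LinearMap.range ((WithLp.linearEquiv 2 𝕜 (H × H)).symm.toLinearMap ∘ₗ D.subtype.prod a)
  have : CompleteSpace G := ha.isClosed_range_toLp.completeSpace_coe
  obtain ⟨t, ht⟩ :
      ∃ t : D, WithLp.toLp 2 ((t : H), a t) = G.starProjection (WithLp.toLp 2 (f, 0)) :=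
    G.starProjection_apply_mem _
  refine ⟨t, fun y => ?_⟩
  have hperp := G.starProjection_inner_eq_zero (WithLp.toLp 2 (f, 0))
    (WithLp.toLp 2 ((y : H), a y)) ⟨y, rfl⟩
  rw [← ht, ← WithLp.toLp_sub, Prod.mk_sub_mk] at hperp
  simp only [WithLp.prod_inner_apply, inner_sub_left, inner_zero_left] at hperp
  linear_combination -hperp

noncomputable def invOneAddSq (ha : IsSelfAdjointOperator a) (f : H) : D :=
  (ha.exists_inner_add_inner_eq f).choose

noncomputable def approxId (ha : IsSelfAdjointOperator a) (n : ℕ) : H → D :=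
  (ha.smul (inv_ne_zero n.cast_add_one_ne_zero)).invOneAddSq

variable (ha : IsSelfAdjointOperator a)
include ha

theorem inner_invOneAddSq_add_inner (f : H) (y : D) :
    ⟪(ha.invOneAddSq f : H), y⟫_𝕜 + ⟪a (ha.invOneAddSq f), a y⟫_𝕜 = ⟪f, y⟫_𝕜 :=
  (ha.exists_inner_add_inner_eq f).choose_spec y

theorem eq_invOneAddSq {f : H} {t : D}
    (ht : ∀ y : D, ⟪(t : H), y⟫_𝕜 + ⟪a t, a y⟫_𝕜 = ⟪f, y⟫_𝕜) : t = ha.invOneAddSq f := by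
  have hsub : ∀ y : D, ⟪((t - ha.invOneAddSq f : D) : H), y⟫_𝕜 +
      ⟪a (t - ha.invOneAddSq f), a y⟫_𝕜 = 0 := fun y => by
    rw [_root_.map_sub, Submodule.coe_sub, inner_sub_left, inner_sub_left]
    linear_combination ht y - ha.inner_invOneAddSq_add_inner f y
  exact sub_eq_zero.mp <| by
    exact_mod_cast eq_zero_of_inner_self_add_inner_self_eq_zero_s14 (hsub _)

theorem invOneAddSq_sub (f g : H) :
    ha.invOneAddSq (f - g) = ha.invOneAddSq f - ha.invOneAddSq g := by
  refine (ha.eq_invOneAddSq fun y => ?_).symm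
  rw [_root_.map_sub, Submodule.coe_sub, inner_sub_left, inner_sub_left, inner_sub_left]
  linear_combination ha.inner_invOneAddSq_add_inner f y - ha.inner_invOneAddSq_add_inner g y

theorem inner_invOneAddSq_left (f g : H) :
    ⟪(ha.invOneAddSq f : H), g⟫_𝕜 = ⟪f, (ha.invOneAddSq g : H)⟫_𝕜 := by
  have hg := congrArg (starRingEnd 𝕜) (ha.inner_invOneAddSq_add_inner g (ha.invOneAddSq f))
  simp only [_root_.map_add, inner_conj_symm] at hg
  linear_combination ha.inner_invOneAddSq_add_inner f (ha.invOneAddSq g) - hg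

theorem norm_sq_add_norm_sq_le (f : H) :
    ‖(ha.invOneAddSq f : H)‖ ^ 2 + ‖a (ha.invOneAddSq f)‖ ^ 2 ≤
      ‖f‖ * ‖(ha.invOneAddSq f : H)‖ := by
  have hre := congrArg RCLike.re (ha.inner_invOneAddSq_add_inner f (ha.invOneAddSq f))
  rw [_root_.map_add, inner_self_eq_norm_sq, inner_self_eq_norm_sq] at hre
  exact hre ▸ re_inner_le_norm f _

theorem norm_invOneAddSq_le (f : H) : ‖(ha.invOneAddSq f : H)‖ ≤ ‖f‖ := by
  nlinarith [ha.norm_sq_add_norm_sq_le f, norm_nonneg f, norm_nonneg (ha.invOneAddSq f : H),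
    sq_nonneg ‖a (ha.invOneAddSq f)‖]

theorem norm_apply_invOneAddSq_le (f : H) : ‖a (ha.invOneAddSq f)‖ ≤ ‖f‖ := by
  nlinarith [ha.norm_sq_add_norm_sq_le f, ha.norm_invOneAddSq_le f, norm_nonneg f,
    norm_nonneg (ha.invOneAddSq f : H), norm_nonneg (a (ha.invOneAddSq f))]

theorem lipschitzWith_invOneAddSq : LipschitzWith 1 fun f => (ha.invOneAddSq f : H) :=
  LipschitzWith.of_dist_le_mul fun f g => by
    simpa [dist_eq_norm, ← Submodule.coe_sub, ← ha.invOneAddSq_sub] using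
      ha.norm_invOneAddSq_le (f - g)

theorem exists_eq_apply_invOneAddSq (f : H) :
    ∃ s : D, (s : H) = a (ha.invOneAddSq f) ∧ a s = f - ha.invOneAddSq f := by
  obtain ⟨hs, has⟩ := ha.adjoint_le (a (ha.invOneAddSq f)) (f - ha.invOneAddSq f) fun x => by
    rw [inner_sub_left]
    linear_combination -ha.inner_invOneAddSq_add_inner f x
  exact ⟨⟨_, hs⟩, rfl, has⟩

theorem invOneAddSq_apply (x : D) : (ha.invOneAddSq (a x) : H) = a (ha.invOneAddSq x) := by
  obtain ⟨s, hs, has⟩ := ha.exists_eq_apply_invOneAddSq x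
  rw [← hs, ← ha.eq_invOneAddSq (t := s) fun y => ?_]
  rw [hs, has, ha.symm, inner_sub_left, ha.symm x y]
  ring

theorem sub_invOneAddSq_eq (x : D) : (x : H) - ha.invOneAddSq x = a (ha.invOneAddSq (a x)) := by
  obtain ⟨s, hs, has⟩ := ha.exists_eq_apply_invOneAddSq x
  rw [show ha.invOneAddSq (a x) = s from Subtype.ext (by rw [ha.invOneAddSq_apply, hs]), has]

theorem norm_sub_invOneAddSq_le (x : D) : ‖(x : H) - ha.invOneAddSq x‖ ≤ ‖a x‖ := by
  rw [ha.sub_invOneAddSq_eq]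
  exact ha.norm_apply_invOneAddSq_le _

theorem norm_sub_approxId_le (n : ℕ) (x : D) :
    ‖(x : H) - ha.approxId n x‖ ≤ ((n : ℝ) + 1)⁻¹ * ‖a x‖ := by
  have h := (ha.smul (inv_ne_zero n.cast_add_one_ne_zero)).norm_sub_invOneAddSq_le x
  rwa [LinearMap.smul_apply, norm_smul, RCLike.norm_ofReal, abs_of_pos (by positivity)] at h

theorem tendsto_approxId (hD : Dense (D : Set H)) (f : H) :
    Tendsto (fun n => (ha.approxId n f : H)) atTop (𝓝 f) := by
  refine hD.induction (P := fun f => Tendsto (fun n => (ha.approxId n f : H)) atTop (𝓝 f))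
    (fun x hx => ?_) ?_ f
  · rw [tendsto_iff_norm_sub_tendsto_zero]
    refine squeeze_zero (fun n => norm_nonneg _) (fun n => ?_)
      (by simpa using tendsto_one_div_add_atTop_nhds_zero_nat.mul_const ‖a ⟨x, hx⟩‖)
    rw [norm_sub_rev]
    exact ha.norm_sub_approxId_le n ⟨x, hx⟩
  · exact (LipschitzWith.uniformEquicontinuous _ 1 fun n =>
      (ha.smul (inv_ne_zero n.cast_add_one_ne_zero)).lipschitzWith_invOneAddSq).equicontinuous
      |>.isClosed_setOfPred_tendsto continuous_id

variable (hb : ∀ x y : D, ⟪b x, (y : H)⟫_𝕜 = ⟪(x : H), b y⟫_𝕜)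
  (hab : ∀ x y : D, ⟪a x, b y⟫_𝕜 = ⟪b x, a y⟫_𝕜)
include hb hab

-- Split `y = R y + a (R (a y))`, move `b` past `a` with `hab`, and use that `R` commutes with `a`.
theorem invOneAddSq_comm (y : D) : (ha.invOneAddSq (b y) : H) = b (ha.invOneAddSq y) := by
  refine ext_inner_left 𝕜 fun u => ?_
  obtain ⟨s, hs, has⟩ := ha.exists_eq_apply_invOneAddSq u
  have hy : (y : H) = ha.invOneAddSq y + a (ha.invOneAddSq (a y)) := by
    rw [← ha.sub_invOneAddSq_eq, add_sub_cancel]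
  calc ⟪u, (ha.invOneAddSq (b y) : H)⟫_𝕜
      = ⟪b (ha.invOneAddSq u), (y : H)⟫_𝕜 := by rw [← ha.inner_invOneAddSq_left, hb]
    _ = ⟪b (ha.invOneAddSq u), (ha.invOneAddSq y : H)⟫_𝕜 +
        ⟪b (ha.invOneAddSq u), a (ha.invOneAddSq (a y))⟫_𝕜 := by rw [← inner_add_right, ← hy]
    _ = ⟪(ha.invOneAddSq u : H), b (ha.invOneAddSq y)⟫_𝕜 + ⟪a s, b (ha.invOneAddSq y)⟫_𝕜 := by
      congr 1
      · exact hb _ _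
      · rw [← hab, ← hs, ← hb, ha.invOneAddSq_apply, hab]
    _ = ⟪u, b (ha.invOneAddSq y)⟫_𝕜 := by rw [← inner_add_left, has, add_sub_cancel]

theorem apply_invOneAddSq_of_adjoint (hD : Dense (D : Set H)) {u v : H}
    (huv : ∀ x : D, ⟪v, (x : H)⟫_𝕜 = ⟪u, b x⟫_𝕜) : b (ha.invOneAddSq u) = ha.invOneAddSq v :=
  hD.eq_of_inner_left 𝕜 fun g hg => by
    rw [hb _ ⟨g, hg⟩, ha.inner_invOneAddSq_left, ha.invOneAddSq_comm hb hab ⟨g, hg⟩, ← huv,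
      ← ha.inner_invOneAddSq_left]

theorem apply_approxId_of_adjoint (hD : Dense (D : Set H)) (n : ℕ) {u v : H}
    (huv : ∀ x : D, ⟪v, (x : H)⟫_𝕜 = ⟪u, b x⟫_𝕜) : b (ha.approxId n u) = ha.approxId n v :=
  (ha.smul (inv_ne_zero n.cast_add_one_ne_zero)).apply_invOneAddSq_of_adjoint hb (fun x y => by
    simp only [LinearMap.smul_apply, inner_smul_left, inner_smul_right, RCLike.conj_ofReal,
      hab x y]) hD huv

theorem adjoint_graph_subset_closure_graph (hD : Dense (D : Set H)) :
    ((LinearPMap.mk D b)†.graph : Set (H × H)) ⊆ closure (LinearPMap.mk D b).graph := by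
  rintro ⟨_, _⟩ hp
  obtain ⟨u, rfl, rfl⟩ := (LinearPMap.mk D b)†.mem_graph_iff.mp hp
  have huv : ∀ x : D, ⟪(LinearPMap.mk D b)† u, (x : H)⟫_𝕜 = ⟪(u : H), b x⟫_𝕜 :=
    adjoint_isFormalAdjoint hD u
  refine mem_closure_of_tendsto ((ha.tendsto_approxId hD u).prodMk_nhds ?_)
    (Eventually.of_forall fun n => (LinearPMap.mk D b).mem_graph (ha.approxId n u))
  simpa only [LinearPMap.mk_apply, ha.apply_approxId_of_adjoint hb hab hD _ huv] using
    ha.tendsto_approxId hD _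

end IsSelfAdjointOperator

theorem LinearPMap.isEssSelfAdjointOp_of_commute [CompleteSpace H] (A C : H →ₗ.[𝕜] H)
    (hdom : A.domain = C.domain) (hA : A.IsSelfAdjointOp) (hC : C.IsSymmetricOp)
    (hcomm : ∀ x y : A.domain,
      ⟪A x, C ⟨y.1, hdom.le y.2⟩⟫_𝕜 = ⟪C ⟨x.1, hdom.le x.2⟩, A y⟫_𝕜) :
    C.IsEssSelfAdjointOp := by
  obtain ⟨D, c⟩ := C
  change A.domain = D at hdom
  subst hdom
  exact isEssSelfAdjointOp_of_adjoint_graph_subset hA.1 hC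
    (hA.isSelfAdjointOperator.adjoint_graph_subset_closure_graph hC hcomm hA.1)

end

theorem essentially_selfadjoint_of_comm_general {𝕜 H : Type*} [RCLike 𝕜]
    [NormedAddCommGroup H] [InnerProductSpace 𝕜 H] [CompleteSpace H]
    (A B : H →ₗ.[𝕜] H) (hdom : A.domain = B.domain)
    (hBsymm : B.IsSymmetricOp)
    (hA : A.IsSelfAdjointOp)
    (hcomm : ∀ x y : A.domain,
      inner (𝕜 := 𝕜) (A x) (B ⟨y.1, hdom.le y.2⟩) =
        inner (𝕜 := 𝕜) (B ⟨x.1, hdom.le x.2⟩) (A y)) :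
    B.IsEssSelfAdjointOp ∧ (A + B).IsEssSelfAdjointOp := by
  have hdom' : A.domain = (A + B).domain := by rw [add_domain, ← hdom, inf_idem]
  refine ⟨isEssSelfAdjointOp_of_commute A B hdom hA hBsymm hcomm,
    isEssSelfAdjointOp_of_commute A (A + B) hdom' hA (hA.isSymmetricOp.add hBsymm) fun x y => ?_⟩
  rw [LinearPMap.add_apply, LinearPMap.add_apply, inner_add_left, inner_add_right]
  exact congrArg₂ (· + ·) rfl (hcomm x y)

/-- **Theorem (Nelson-type perturbation).** Let `A, B` be symmetric operators in a Hilbert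
space `H` with common dense domain `𝒟`. If `A` is selfadjoint and
`⟪A x, B y⟫ = ⟪B x, A y⟫` for all `x, y ∈ 𝒟`, then `B` and `A + B` (each with domain `𝒟`)
are essentially selfadjoint. -/
theorem essentially_selfadjoint_of_comm {𝕜 H : Type*} [RCLike 𝕜]
    [NormedAddCommGroup H] [InnerProductSpace 𝕜 H] [CompleteSpace H]
    (A B : H →ₗ.[𝕜] H) (hdom : A.domain = B.domain) (hdense : Dense (A.domain : Set H))
    (hAsymm : A.IsSymmetricOp) (hBsymm : B.IsSymmetricOp)
    (hA : A.IsSelfAdjointOp)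
    (hcomm : ∀ x y : A.domain,
      inner (𝕜 := 𝕜) (A x) (B ⟨y.1, hdom.le y.2⟩) =
        inner (𝕜 := 𝕜) (B ⟨x.1, hdom.le x.2⟩) (A y)) :
    B.IsEssSelfAdjointOp ∧ (A + B).IsEssSelfAdjointOp :=
  essentially_selfadjoint_of_comm_general A B hdom hBsymm hA hcomm
end
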